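/- arXiv:1807.06101 — 7 statements merged into one kernel-verified Lean document; each statement's English description precedes it below -/
import Mathlib

section
/- Let A be an n×d real matrix (n, d ≥ 1) all of whose entries are integers with |A_{i,j}| ≤ γ for all i, j (where γ ≥ 1), and suppose that the rank of A is strictly greater than k. Then for every real n×d matrix B of rank at most k, the entrywise ℓ1 distance satisfies ∑_{i,j} |A_{i,j} − B_{i,j}| ≥ (n·d·γ²)^{−k}. -/
open Matrix Finset Module

private lemma fact_le_pow_aux : ∀ k : ℕ, (k+1).factorial ≤ (k+1)^k
  | 0 => le_refl 1
  | (k+1) => by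
    calc (k+2).factorial = (k+2) * (k+1).factorial := rfl
    _ ≤ (k+2) * (k+1)^k := Nat.mul_le_mul_left _ (fact_le_pow_aux k)
    _ ≤ (k+2) * (k+2)^k := Nat.mul_le_mul_left _ (Nat.pow_le_pow_left (by omega) k)
    _ = (k+2)^(k+1) := (pow_succ' _ _).symm

private lemma prod_sub_prod_abs_le {ι : Type*} [DecidableEq ι] (s : Finset ι)
    (f g : ι → ℝ) (C : ℝ) (hC : 0 ≤ C)
    (hf : ∀ i ∈ s, |f i| ≤ C) (hg : ∀ i ∈ s, |g i| ≤ C) :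
    |∏ i ∈ s, f i - ∏ i ∈ s, g i| ≤ (∑ i ∈ s, |f i - g i|) * C ^ (s.card - 1) := by
  induction s using Finset.induction_on with
  | empty => simp
  | @insert a s ha ih =>
    have hfa : |f a| ≤ C := hf a (Finset.mem_insert_self a s)
    have hf' : ∀ i ∈ s, |f i| ≤ C := fun i hi => hf i (Finset.mem_insert_of_mem hi)
    have hg' : ∀ i ∈ s, |g i| ≤ C := fun i hi => hg i (Finset.mem_insert_of_mem hi)
    have ih' := ih hf' hg'
    rw [Finset.prod_insert ha, Finset.prod_insert ha, Finset.sum_insert ha,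
      Finset.card_insert_of_notMem ha]
    have hQ : |∏ i ∈ s, g i| ≤ C ^ s.card := by
      rw [Finset.abs_prod]
      calc ∏ i ∈ s, |g i| ≤ ∏ i ∈ s, C := Finset.prod_le_prod (fun i _ => abs_nonneg _) hg'
        _ = C ^ s.card := by rw [Finset.prod_const]
    have key : C * ((∑ i ∈ s, |f i - g i|) * C ^ (s.card - 1)) ≤
        (∑ i ∈ s, |f i - g i|) * C ^ s.card := by
      rcases Nat.eq_zero_or_pos s.card with h0 | hpos
      · have : s = ∅ := Finset.card_eq_zero.mp h0
        subst this; simp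
      · have hpow : C * C ^ (s.card - 1) = C ^ s.card := by
          conv_rhs => rw [show s.card = (s.card - 1) + 1 by omega]
          rw [pow_succ']
        exact le_of_eq (by rw [← hpow]; ring)
    have t1 : |f a| * |∏ i ∈ s, f i - ∏ i ∈ s, g i|
        ≤ C * ((∑ i ∈ s, |f i - g i|) * C ^ (s.card - 1)) :=
      mul_le_mul hfa ih' (abs_nonneg _) hC
    have t2 : |f a - g a| * |∏ i ∈ s, g i| ≤ |f a - g a| * C ^ s.card :=
      mul_le_mul_of_nonneg_left hQ (abs_nonneg _)
    calc |f a * ∏ i ∈ s, f i - g a * ∏ i ∈ s, g i|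
        = |f a * (∏ i ∈ s, f i - ∏ i ∈ s, g i) + (f a - g a) * ∏ i ∈ s, g i| := by ring_nf
      _ ≤ |f a * (∏ i ∈ s, f i - ∏ i ∈ s, g i)| + |(f a - g a) * ∏ i ∈ s, g i| := abs_add_le _ _
      _ = |f a| * |∏ i ∈ s, f i - ∏ i ∈ s, g i| + |f a - g a| * |∏ i ∈ s, g i| := by
          rw [abs_mul, abs_mul]
      _ ≤ C * ((∑ i ∈ s, |f i - g i|) * C ^ (s.card - 1)) + |f a - g a| * C ^ s.card :=
          add_le_add t1 t2
      _ ≤ (∑ i ∈ s, |f i - g i|) * C ^ s.card + |f a - g a| * C ^ s.card :=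
          add_le_add_left key _
      _ = (|f a - g a| + ∑ i ∈ s, |f i - g i|) * C ^ (s.card + 1 - 1) := by
          rw [Nat.add_sub_cancel]; ring

private lemma exists_inj_comp_linearIndependent {ι V : Type*} [Fintype ι] [AddCommGroup V]
    [Module ℝ V] [FiniteDimensional ℝ V] (v : ι → V) (k : ℕ)
    (h : k + 1 ≤ finrank ℝ (Submodule.span ℝ (Set.range v))) :
    ∃ c : Fin (k+1) → ι, Function.Injective c ∧ LinearIndependent ℝ (v ∘ c) := by
  obtain ⟨b, hbt, hspan, hbi⟩ := exists_linearIndependent ℝ (Set.range v)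
  have hbfin : b.Finite := (Set.finite_range v).subset hbt
  haveI : Fintype b := hbfin.fintype
  have hcard : k + 1 ≤ Fintype.card b := by
    have := finrank_span_set_eq_card hbi
    rw [hspan] at this
    rw [← Set.toFinset_card]
    omega
  obtain ⟨g⟩ : Nonempty (Fin (k+1) ↪ b) := by
    apply Function.Embedding.nonempty_of_card_le
    simpa using hcard
  have hw : LinearIndependent ℝ (fun i : Fin (k+1) => ((g i : V))) :=
    hbi.comp g g.injective
  have hmem : ∀ i : Fin (k+1), ∃ x, v x = (g i : V) := fun i => hbt (g i).2
  choose c hc using hmem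
  have hvc : v ∘ c = fun i => ((g i : V)) := funext fun i => hc i
  refine ⟨c, ?_, by rw [hvc]; exact hw⟩
  intro i j hij
  have : (g i : V) = (g j : V) := by rw [← hc i, ← hc j, hij]
  exact g.injective (Subtype.ext this)

private lemma exists_minor {n d k : ℕ} (A : Matrix (Fin n) (Fin d) ℝ) (h : k < A.rank) :
    ∃ (r : Fin (k+1) → Fin n) (c : Fin (k+1) → Fin d),
      Function.Injective r ∧ Function.Injective c ∧ (A.submatrix r c).det ≠ 0 := by
  have h1 : k + 1 ≤ finrank ℝ (Submodule.span ℝ (Set.range Aᵀ)) := by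
    change k + 1 ≤ finrank ℝ (Submodule.span ℝ (Set.range A.col))
    rw [← rank_eq_finrank_span_cols]; omega
  obtain ⟨c, hcinj, hcli⟩ := exists_inj_comp_linearIndependent Aᵀ k h1
  set A₁ : Matrix (Fin n) (Fin (k+1)) ℝ := A.submatrix id c with hA₁
  have hA₁t : A₁ᵀ = Aᵀ ∘ c := by ext j i; rfl
  have hrank1 : A₁.rank = k + 1 := by
    rw [rank_eq_finrank_span_cols, show A₁.col = A₁ᵀ from rfl, hA₁t, finrank_span_eq_card hcli, Fintype.card_fin]
  have h2 : k + 1 ≤ finrank ℝ (Submodule.span ℝ (Set.range A₁)) := by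
    have hh : finrank ℝ (Submodule.span ℝ (Set.range A₁)) = A₁ᵀ.rank := by
      rw [rank_eq_finrank_span_cols, show A₁ᵀ.col = A₁ᵀᵀ from rfl, transpose_transpose]
    rw [hh, rank_transpose, hrank1]
  obtain ⟨r, hrinj, hrli⟩ := exists_inj_comp_linearIndependent A₁ k h2
  refine ⟨r, c, hrinj, hcinj, ?_⟩
  have hrows : LinearIndependent ℝ (fun i => (A.submatrix r c) i) := hrli
  have hu : IsUnit (A.submatrix r c) := linearIndependent_rows_iff_isUnit.mp hrows
  intro hdet
  have := (Matrix.isUnit_iff_isUnit_det _).mp hu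
  rw [hdet] at this
  exact not_isUnit_zero this

private lemma abs_det_sub_det_le {m : ℕ} (M N : Matrix (Fin (m+1)) (Fin (m+1)) ℝ) (C : ℝ)
    (hC : 0 ≤ C) (hM : ∀ i j, |M i j| ≤ C) (hN : ∀ i j, |N i j| ≤ C) :
    |M.det - N.det| ≤ (m+1).factorial * C ^ m * ∑ i, ∑ j, |M i j - N i j| := by
  rw [Matrix.det_apply', Matrix.det_apply', ← Finset.sum_sub_distrib]
  set S := ∑ i, ∑ j, |M i j - N i j| with hS
  have hterm : ∀ σ : Equiv.Perm (Fin (m+1)),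
      |((Equiv.Perm.sign σ : ℤ) : ℝ) * ∏ i, M (σ i) i -
        ((Equiv.Perm.sign σ : ℤ) : ℝ) * ∏ i, N (σ i) i| ≤ C ^ m * S := by
    intro σ
    have hsign : |((Equiv.Perm.sign σ : ℤ) : ℝ)| = 1 := by
      rcases Int.units_eq_one_or (Equiv.Perm.sign σ) with h | h <;> rw [h] <;> norm_num
    rw [← mul_sub, abs_mul, hsign, one_mul]
    have hb := prod_sub_prod_abs_le Finset.univ (fun i => M (σ i) i) (fun i => N (σ i) i) C hC
      (fun i _ => hM _ _) (fun i _ => hN _ _)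
    have hsle : ∑ i, |M (σ i) i - N (σ i) i| ≤ S := by
      rw [hS, Finset.sum_comm]
      apply Finset.sum_le_sum
      intro i _
      exact Finset.single_le_sum (f := fun j => |M j i - N j i|)
        (fun j _ => abs_nonneg _) (Finset.mem_univ (σ i))
    calc |∏ i, M (σ i) i - ∏ i, N (σ i) i|
        ≤ (∑ i, |M (σ i) i - N (σ i) i|) * C ^ (Finset.univ.card - 1) := hb
      _ = (∑ i, |M (σ i) i - N (σ i) i|) * C ^ m := by
          rw [Finset.card_univ, Fintype.card_fin, Nat.add_sub_cancel]
      _ ≤ S * C ^ m := by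
          apply mul_le_mul_of_nonneg_right hsle (pow_nonneg hC m)
      _ = C ^ m * S := mul_comm _ _
  calc |∑ σ : Equiv.Perm (Fin (m+1)),
        (((Equiv.Perm.sign σ : ℤ) : ℝ) * ∏ i, M (σ i) i -
         ((Equiv.Perm.sign σ : ℤ) : ℝ) * ∏ i, N (σ i) i)|
      ≤ ∑ σ : Equiv.Perm (Fin (m+1)),
        |((Equiv.Perm.sign σ : ℤ) : ℝ) * ∏ i, M (σ i) i -
         ((Equiv.Perm.sign σ : ℤ) : ℝ) * ∏ i, N (σ i) i| := Finset.abs_sum_le_sum_abs _ _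
    _ ≤ ∑ _σ : Equiv.Perm (Fin (m+1)), C ^ m * S := Finset.sum_le_sum fun σ _ => hterm σ
    _ = (m+1).factorial * C ^ m * S := by
        rw [Finset.sum_const, Finset.card_univ, Fintype.card_perm, Fintype.card_fin]
        simp [nsmul_eq_mul]; ring

private lemma sum_comp_le {a b : ℕ} (c : Fin a → Fin b) (hc : Function.Injective c)
    (f : Fin b → ℝ) (hf : ∀ j, 0 ≤ f j) : ∑ j, f (c j) ≤ ∑ j, f j := by
  rw [← Finset.sum_image (g := c) (fun x _ y _ h => hc h)]
  exact Finset.sum_le_sum_of_subset_of_nonneg (Finset.subset_univ _) (fun j _ _ => hf j)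


/-- If `A` is an `n × d` real matrix (`n, d ≥ 1`) whose entries are
integers of absolute value at most `γ` (with `γ ≥ 1`) and `rank A > k`, then every real
matrix `B` of rank at most `k` satisfies `∑_{i,j} |A i j - B i j| ≥ (n·d·γ²)^{-k}`. -/
theorem stmt0 {n d : ℕ} (hn : 1 ≤ n) (hd : 1 ≤ d)
    (A : Matrix (Fin n) (Fin d) ℝ) (γ : ℝ) (hγ : 1 ≤ γ)
    (hint : ∀ i j, ∃ z : ℤ, A i j = (z : ℝ))
    (habs : ∀ i j, |A i j| ≤ γ)
    (k : ℕ) (hrank : k < A.rank) :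
    ∀ B : Matrix (Fin n) (Fin d) ℝ, B.rank ≤ k →
      (((n : ℝ) * d * γ ^ 2) ^ k)⁻¹ ≤ ∑ i, ∑ j, |A i j - B i j| := by
  intro B hB
  have hn1 : (1:ℝ) ≤ n := by exact_mod_cast hn
  have hd1 : (1:ℝ) ≤ d := by exact_mod_cast hd
  have hγ0 : (0:ℝ) < γ := lt_of_lt_of_le one_pos hγ
  have hγ2 : (1:ℝ) ≤ γ^2 := by nlinarith
  have hnd : (1:ℝ) ≤ (n:ℝ) * d := by nlinarith
  have hP1 : (1:ℝ) ≤ (n:ℝ) * d * γ^2 := by nlinarith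
  have hPk : (1:ℝ) ≤ ((n:ℝ) * d * γ^2)^k := one_le_pow₀ hP1
  set ε := ∑ i, ∑ j, |A i j - B i j| with hε
  have hεnn : 0 ≤ ε := Finset.sum_nonneg fun _ _ => Finset.sum_nonneg fun _ _ => abs_nonneg _
  have hRHS : (((n:ℝ)*d*γ^2)^k)⁻¹ ≤ 1 := by
    apply inv_le_one_of_one_le₀ hPk
  by_cases hcase : 1 ≤ ε
  · exact le_trans hRHS hcase
  push_neg at hcase
  have hεterm : ∀ i j, |A i j - B i j| ≤ ε := by
    intro i j
    have step1 : |A i j - B i j| ≤ ∑ j', |A i j' - B i j'| :=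
      Finset.single_le_sum (f := fun j' => |A i j' - B i j'|)
        (fun _ _ => abs_nonneg _) (Finset.mem_univ j)
    have step2 : ∑ j', |A i j' - B i j'| ≤ ε :=
      Finset.single_le_sum (f := fun i' => ∑ j', |A i' j' - B i' j'|)
        (fun _ _ => Finset.sum_nonneg fun _ _ => abs_nonneg _) (Finset.mem_univ i)
    exact le_trans step1 step2
  have hBabs : ∀ i j, |B i j| ≤ 2*γ := by
    intro i j
    have h1 : |A i j - B i j| ≤ 1 := le_of_lt (lt_of_le_of_lt (hεterm i j) hcase)
    calc |B i j| = |A i j - (A i j - B i j)| := by ring_nf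
      _ ≤ |A i j| + |A i j - B i j| := abs_sub _ _
      _ ≤ γ + 1 := add_le_add (habs i j) h1
      _ ≤ 2*γ := by linarith
  obtain ⟨r, c, hrinj, hcinj, hdet⟩ := exists_minor A hrank
  have hkn : k + 1 ≤ n := by have := A.rank_le_height; omega
  have hkd : k + 1 ≤ d := by have := A.rank_le_width; omega
  choose Z hZ using hint
  set M := A.submatrix r c with hM
  set N := B.submatrix r c with hN
  have h1le : (1:ℝ) ≤ |M.det| := by
    have hMdet_int : M.det = (((Matrix.of fun i j => Z (r i) (c j)).det : ℤ) : ℝ) := by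
      have hmap : M = (Matrix.of fun i j => Z (r i) (c j)).map (Int.cast : ℤ → ℝ) := by
        ext i j
        simp [hM, Matrix.submatrix_apply, Matrix.map_apply, hZ]
      rw [hmap]
      exact (RingHom.map_det (Int.castRingHom ℝ) _).symm
    rw [hMdet_int]
    have hz0 : (Matrix.of fun i j => Z (r i) (c j)).det ≠ 0 := by
      intro h0
      apply hdet
      rw [← hM] at *
      rw [hMdet_int, h0]; simp
    rw [← Int.cast_abs]
    exact_mod_cast Int.one_le_abs hz0
  have hNdet : N.det = 0 := by
    by_contra h0
    have hu : IsUnit N := (Matrix.isUnit_iff_isUnit_det N).mpr (isUnit_iff_ne_zero.mpr h0)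
    have hcard := Matrix.rank_of_isUnit N hu
    have e1 : N = ((1 : Matrix (Fin n) (Fin n) ℝ).submatrix r id * B) *
        (1 : Matrix (Fin d) (Fin d) ℝ).submatrix id c := by
      ext i j
      simp [Matrix.mul_apply, hN, Matrix.one_apply, Finset.sum_ite_eq, Finset.sum_ite_eq',
        ite_mul, mul_ite, zero_mul, mul_zero]
    have hle : N.rank ≤ k := by
      calc N.rank ≤ ((1 : Matrix (Fin n) (Fin n) ℝ).submatrix r id * B).rank := by
            rw [e1]; exact Matrix.rank_mul_le_left _ _
        _ ≤ B.rank := Matrix.rank_mul_le_right _ _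
        _ ≤ k := hB
    rw [hcard, Fintype.card_fin] at hle
    omega
  have hbound := abs_det_sub_det_le M N (2*γ) (by linarith)
    (fun i j => le_trans (habs _ _) (by linarith)) (fun i j => hBabs _ _)
  have hsub : ∑ i, ∑ j, |M i j - N i j| ≤ ε := by
    have hrow : ∀ i' : Fin n, ∑ j, |A i' (c j) - B i' (c j)| ≤ ∑ j', |A i' j' - B i' j'| :=
      fun i' => sum_comp_le c hcinj (fun j' => |A i' j' - B i' j'|) (fun _ => abs_nonneg _)
    calc ∑ i, ∑ j, |M i j - N i j| = ∑ i, ∑ j, |A (r i) (c j) - B (r i) (c j)| := rfl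
      _ ≤ ∑ i : Fin (k+1), ∑ j', |A (r i) j' - B (r i) j'| :=
          Finset.sum_le_sum fun i _ => hrow (r i)
      _ ≤ ε := sum_comp_le r hrinj (fun i' => ∑ j', |A i' j' - B i' j'|)
          (fun _ => Finset.sum_nonneg fun _ _ => abs_nonneg _)
  have hfact : ((k+1).factorial : ℝ) * (2*γ)^k ≤ ((n:ℝ)*d*γ^2)^k := by
    rcases Nat.eq_zero_or_pos k with hk0 | hkpos
    · subst hk0; norm_num [Nat.factorial]
    · have h1 : ((k+1).factorial : ℝ) ≤ (n:ℝ)^k := by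
        calc ((k+1).factorial : ℝ) ≤ ((k+1):ℝ)^k := by exact_mod_cast fact_le_pow_aux k
          _ ≤ (n:ℝ)^k := pow_le_pow_left₀ (by positivity) (by exact_mod_cast hkn) k
      have hd2 : (2:ℝ) ≤ d := by exact_mod_cast (by omega : 2 ≤ d)
      have h2γ : 2*γ ≤ (d:ℝ)*γ^2 := by nlinarith
      have h2 : (2*γ)^k ≤ ((d:ℝ)*γ^2)^k := pow_le_pow_left₀ (by linarith) h2γ k
      calc ((k+1).factorial:ℝ) * (2*γ)^k ≤ (n:ℝ)^k * ((d:ℝ)*γ^2)^k :=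
            mul_le_mul h1 h2 (by positivity) (by positivity)
        _ = ((n:ℝ)*d*γ^2)^k := by rw [← mul_pow]; ring_nf
  have hchain : (1:ℝ) ≤ ((n:ℝ)*d*γ^2)^k * ε := by
    calc (1:ℝ) ≤ |M.det| := h1le
      _ = |M.det - N.det| := by rw [hNdet, sub_zero]
      _ ≤ ((k+1).factorial:ℝ) * (2*γ)^k * ∑ i, ∑ j, |M i j - N i j| := hbound
      _ ≤ ((n:ℝ)*d*γ^2)^k * ε :=
          mul_le_mul hfact hsub
            (Finset.sum_nonneg fun _ _ => Finset.sum_nonneg fun _ _ => abs_nonneg _)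
            (by positivity)
  have hPpos : (0:ℝ) < ((n:ℝ)*d*γ^2)^k := by positivity
  have := mul_le_mul_of_nonneg_left hchain (le_of_lt (inv_pos.mpr hPpos))
  rw [mul_one, ← mul_assoc, inv_mul_cancel₀ (ne_of_gt hPpos), one_mul] at this
  exact this
end

section
/- Let p ∈ (1, ∞) and let p* = p/(p − 1) be its Hölder conjugate. Let A be an n×d real matrix with n ≥ d ≥ 1, and set k = d − 1. Then the infimum over all U ∈ ℝ^{n×k} and V ∈ ℝ^{k×d} of ‖UV − A‖_p equals the minimum over all x ∈ ℝ^d with ‖x‖_{p*} = 1 of ‖Ax‖_p. -/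
/-- The ℓ_r norm of a vector, `(∑ i, |v i| ^ r) ^ (1/r)` (real exponent). -/
noncomputable def vecNorm {n : ℕ} (r : ℝ) (v : Fin n → ℝ) : ℝ :=
  (∑ i, |v i| ^ r) ^ (1 / r)

/-- The entrywise ℓ_p norm of a matrix, `(∑ i j, |M i j| ^ p) ^ (1/p)`. -/
noncomputable def entNorm {n d : ℕ} (p : ℝ) (M : Matrix (Fin n) (Fin d) ℝ) : ℝ :=
  (∑ i, ∑ j, |M i j| ^ p) ^ (1 / p)

lemma sum_abs_rpow_nonneg {n : ℕ} (r : ℝ) (v : Fin n → ℝ) : 0 ≤ ∑ i, |v i| ^ r :=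
  Finset.sum_nonneg fun _ _ => Real.rpow_nonneg (abs_nonneg _) r

lemma vecNorm_eq_one_iff {n : ℕ} {r : ℝ} (hr : 0 < r) {v : Fin n → ℝ} :
    vecNorm r v = 1 ↔ ∑ i, |v i| ^ r = 1 := by
  unfold vecNorm
  constructor
  · intro h
    have h2 := congrArg (· ^ r) h
    simpa [← Real.rpow_natCast, ← Real.rpow_mul (sum_abs_rpow_nonneg r v), one_div,
      inv_mul_cancel₀ hr.ne'] using h2
  · intro h; simp [h]

lemma vecNorm_smul {n : ℕ} {r : ℝ} (hr : 0 < r) (c : ℝ) (v : Fin n → ℝ) :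
    vecNorm r (c • v) = |c| * vecNorm r v := by
  unfold vecNorm
  have h1 : ∀ i, |(c • v) i| ^ r = |c| ^ r * |v i| ^ r := by
    intro i
    simp [Pi.smul_apply, smul_eq_mul, abs_mul, Real.mul_rpow (abs_nonneg _) (abs_nonneg _)]
  rw [Finset.sum_congr rfl fun i _ => h1 i, ← Finset.mul_sum,
    Real.mul_rpow (Real.rpow_nonneg (abs_nonneg c) r) (sum_abs_rpow_nonneg r v),
    ← Real.rpow_mul (abs_nonneg c), mul_one_div_cancel hr.ne', Real.rpow_one]

lemma vecNorm_neg {n : ℕ} (r : ℝ) (v : Fin n → ℝ) : vecNorm r (-v) = vecNorm r v := by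
  unfold vecNorm; simp

lemma holder_row {d : ℕ} {p q : ℝ} (hpq : p.HolderConjugate q) (f x : Fin d → ℝ) :
    |∑ j, f j * x j| ≤ (∑ j, |f j| ^ p) ^ (1 / p) * (∑ j, |x j| ^ q) ^ (1 / q) := by
  calc |∑ j, f j * x j| ≤ ∑ j, |f j| * |x j| := by
        refine (Finset.abs_sum_le_sum_abs _ _).trans ?_
        refine Finset.sum_le_sum fun j _ => ?_
        rw [abs_mul]
      _ ≤ _ := by
        simpa using Real.inner_le_Lp_mul_Lq Finset.univ (fun j => |f j|) (fun j => |x j|) hpq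

lemma vecNorm_mulVec_le {n d : ℕ} {p q : ℝ} (hpq : p.HolderConjugate q)
    (M : Matrix (Fin n) (Fin d) ℝ) {x : Fin d → ℝ} (hx : vecNorm q x = 1) :
    vecNorm p (M.mulVec x) ≤ entNorm p M := by
  have hq : 0 < q := hpq.symm.pos
  have hx' : ∑ j, |x j| ^ q = 1 := (vecNorm_eq_one_iff hq).1 hx
  unfold vecNorm entNorm
  refine Real.rpow_le_rpow (sum_abs_rpow_nonneg _ _) ?_ hpq.one_div_nonneg
  refine Finset.sum_le_sum fun i _ => ?_
  have h1 : |M.mulVec x i| ≤ (∑ j, |M i j| ^ p) ^ (1 / p) := by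
    have h := holder_row hpq (M i) x
    rw [hx', Real.one_rpow, mul_one] at h
    exact h
  calc |M.mulVec x i| ^ p ≤ ((∑ j, |M i j| ^ p) ^ (1 / p)) ^ p :=
        Real.rpow_le_rpow (abs_nonneg _) h1 hpq.nonneg
    _ = ∑ j, |M i j| ^ p := by
        rw [← Real.rpow_mul (sum_abs_rpow_nonneg _ _), one_div,
          inv_mul_cancel₀ hpq.ne_zero, Real.rpow_one]

lemma continuous_vecNorm {n : ℕ} {r : ℝ} (hr : 0 < r) :
    Continuous (vecNorm (n := n) r) := by
  unfold vecNorm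
  refine Continuous.rpow_const ?_ fun x => Or.inr (by positivity)
  exact continuous_finset_sum _ fun i _ =>
    ((continuous_apply i).abs).rpow_const fun x => Or.inr hr.le

lemma sphere_isCompact {n : ℕ} {q : ℝ} (hq : 0 < q) :
    IsCompact {x : Fin n → ℝ | vecNorm q x = 1} := by
  have hclosed : IsClosed {x : Fin n → ℝ | vecNorm q x = 1} :=
    isClosed_eq (continuous_vecNorm hq) continuous_const
  refine (isCompact_closedBall (0 : Fin n → ℝ) 1).of_isClosed_subset hclosed ?_
  intro x hx
  have hsum : ∑ i, |x i| ^ q = 1 := (vecNorm_eq_one_iff hq).1 hx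
  rw [Metric.mem_closedBall, dist_zero_right]
  rw [pi_norm_le_iff_of_nonneg zero_le_one]
  intro i
  rw [Real.norm_eq_abs]
  by_contra h
  push_neg at h
  have h1 : (1 : ℝ) < |x i| ^ q :=
    Real.one_lt_rpow_iff_of_pos (lt_trans one_pos h) |>.2 (Or.inl ⟨h, hq⟩)
  have h2 : |x i| ^ q ≤ ∑ i, |x i| ^ q :=
    Finset.single_le_sum (fun j _ => Real.rpow_nonneg (abs_nonneg _) q) (Finset.mem_univ i)
  rw [hsum] at h2
  linarith

lemma exists_min_on_sphere {n d : ℕ} {p q : ℝ} (hp : 0 < p) (hq : 0 < q)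
    (A : Matrix (Fin n) (Fin d) ℝ) (hne : {x : Fin d → ℝ | vecNorm q x = 1}.Nonempty) :
    ∃ x₀, vecNorm q x₀ = 1 ∧
      ∀ y : Fin d → ℝ, vecNorm q y = 1 →
        vecNorm p (A.mulVec x₀) ≤ vecNorm p (A.mulVec y) := by
  have hcont : Continuous fun x : Fin d → ℝ => vecNorm p (A.mulVec x) := by
    refine (continuous_vecNorm hp).comp ?_
    show Continuous fun x : Fin d → ℝ => A.mulVec x
    refine continuous_pi fun i => ?_
    show Continuous fun x : Fin d → ℝ => ∑ j, A i j * x j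
    exact continuous_finset_sum _ fun j _ => continuous_const.mul (continuous_apply j)
  obtain ⟨x₀, hx₀, hmin⟩ := (sphere_isCompact hq).exists_isMinOn hne hcont.continuousOn
  exact ⟨x₀, hx₀, fun y hy => hmin hy⟩

lemma exists_kernel_vec {m : ℕ} (V : Matrix (Fin m) (Fin (m + 1)) ℝ) :
    ∃ x : Fin (m + 1) → ℝ, x ≠ 0 ∧ V.mulVec x = 0 := by
  have hni : ¬ Function.Injective V.mulVecLin := by
    intro h
    have := LinearMap.finrank_le_finrank_of_injective h
    simp [Module.finrank_fin_fun] at this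
  rw [Function.not_injective_iff] at hni
  obtain ⟨a, b, hab, hne⟩ := hni
  refine ⟨a - b, sub_ne_zero.2 hne, ?_⟩
  have : V.mulVecLin (a - b) = 0 := by rw [map_sub, hab, sub_self]
  simpa [Matrix.mulVecLin_apply] using this

/-- For `p ∈ (1, ∞)`, `n ≥ d ≥ 1` and `k = d - 1`, the infimum of
`‖UV − A‖_p` over `U ∈ ℝ^{n×k}`, `V ∈ ℝ^{k×d}` is attained as the minimum over unit
vectors `x` (in the `p*` norm, `p* = p/(p-1)`) of `‖Ax‖_p`. -/
theorem stmt8 (p : ℝ) (hp : 1 < p) {n d : ℕ} (hd : 1 ≤ d) (hnd : d ≤ n)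
    (A : Matrix (Fin n) (Fin d) ℝ) :
    IsLeast {r : ℝ | ∃ x : Fin d → ℝ, vecNorm (p / (p - 1)) x = 1 ∧
        r = vecNorm p (A.mulVec x)}
      (sInf {r : ℝ | ∃ (U : Matrix (Fin n) (Fin (d - 1)) ℝ)
          (V : Matrix (Fin (d - 1)) (Fin d) ℝ), r = entNorm p (U * V - A)}) := by
  obtain ⟨m, rfl⟩ : ∃ m, d = m + 1 := ⟨d - 1, (Nat.succ_pred_eq_of_pos hd).symm⟩
  simp only [Nat.succ_sub_one]
  set q : ℝ := p / (p - 1) with hq_def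
  have hpq : p.HolderConjugate q := Real.HolderConjugate.conjExponent hp
  have hq0 : 0 < q := hpq.symm.pos
  have hp0 : 0 < p := hpq.pos
  -- the sphere is nonempty
  have hne : {x : Fin (m + 1) → ℝ | vecNorm q x = 1}.Nonempty := by
    refine ⟨(Pi.single 0 1 : Fin (m + 1) → ℝ), ?_⟩
    rw [Set.mem_setOf_eq, vecNorm_eq_one_iff hq0]
    have hsingle : ∀ i : Fin (m + 1),
        |(Pi.single 0 1 : Fin (m + 1) → ℝ) i| ^ q = if i = 0 then 1 else 0 := by
      intro i
      rcases eq_or_ne i 0 with rfl | h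
      · simp
      · simp [Pi.single_apply, h, Real.zero_rpow hq0.ne']
    rw [Finset.sum_congr rfl fun i _ => hsingle i]
    simp
  obtain ⟨x₀, hx₀, hmin⟩ := exists_min_on_sphere hp0 hq0 A hne
  have hx₀sum : ∑ l, |x₀ l| ^ q = 1 := (vecNorm_eq_one_iff hq0).1 hx₀
  have hqm1 : (q - 1) * p = q := by linear_combination hpq.mul_eq_add
  -- the dual vector z
  set z : Fin (m + 1) → ℝ := fun l => Real.sign (x₀ l) * |x₀ l| ^ (q - 1) with hz_def
  have habsz : ∀ l, |z l| = |x₀ l| ^ (q - 1) := by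
    intro l
    rcases eq_or_ne (x₀ l) 0 with h | h
    · simp [hz_def, h, Real.zero_rpow hpq.symm.sub_one_ne_zero]
    · rw [hz_def]
      simp only
      rw [abs_mul, abs_of_nonneg (Real.rpow_nonneg (abs_nonneg _) _)]
      rcases h.lt_or_gt with hlt | hlt
      · rw [Real.sign_of_neg hlt]; norm_num
      · rw [Real.sign_of_pos hlt]; norm_num
  have hzx : ∀ l, z l * x₀ l = |x₀ l| ^ q := by
    intro l
    rcases eq_or_ne (x₀ l) 0 with h | h
    · simp [hz_def, h, Real.zero_rpow hq0.ne']
    · have hsx : Real.sign (x₀ l) * x₀ l = |x₀ l| := by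
        rcases h.lt_or_gt with hlt | hlt
        · rw [Real.sign_of_neg hlt, abs_of_neg hlt]; ring
        · rw [Real.sign_of_pos hlt, abs_of_pos hlt]; ring
      have h2 : z l * x₀ l = |x₀ l| ^ (q - 1) * (Real.sign (x₀ l) * x₀ l) := by
        rw [hz_def]; ring
      rw [h2, hsx, ← Real.rpow_add_one (abs_ne_zero.2 h), sub_add_cancel]
  have hzxsum : ∑ l, z l * x₀ l = 1 := by
    rw [Finset.sum_congr rfl fun l _ => hzx l, hx₀sum]
  have hzpsum : ∑ l, |z l| ^ p = 1 := by
    have h3 : ∀ l, |z l| ^ p = |x₀ l| ^ q := by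
      intro l
      rw [habsz l, ← Real.rpow_mul (abs_nonneg _), hqm1]
    rw [Finset.sum_congr rfl fun l _ => h3 l, hx₀sum]
  -- the rank-deficient matrix B
  set N : Matrix (Fin n) (Fin (m + 1)) ℝ := Matrix.of fun i l => A.mulVec x₀ i * z l with hN_def
  set B : Matrix (Fin n) (Fin (m + 1)) ℝ := A - N with hB_def
  have hBx : ∀ i, ∑ l, B i l * x₀ l = 0 := by
    intro i
    have h4 : ∀ l, B i l * x₀ l = A i l * x₀ l - A.mulVec x₀ i * (z l * x₀ l) := by
      intro l
      rw [hB_def]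
      simp only [Matrix.sub_apply, hN_def, Matrix.of_apply]
      ring
    rw [Finset.sum_congr rfl fun l _ => h4 l, Finset.sum_sub_distrib, ← Finset.mul_sum,
      hzxsum, mul_one]
    have h5 : A.mulVec x₀ i = ∑ l, A i l * x₀ l := rfl
    rw [← h5, sub_self]
  -- a nonzero coordinate of x₀
  obtain ⟨j, hj⟩ : ∃ j, x₀ j ≠ 0 := by
    by_contra h
    push_neg at h
    have h6 : ∑ l, |x₀ l| ^ q = 0 := by simp [h, Real.zero_rpow hq0.ne']
    rw [hx₀sum] at h6
    norm_num at h6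
  -- factorization B = U * V
  set U : Matrix (Fin n) (Fin m) ℝ := Matrix.of fun i k => B i (j.succAbove k) with hU_def
  set V : Matrix (Fin m) (Fin (m + 1)) ℝ := Matrix.of fun k l =>
    (if l = j.succAbove k then (1 : ℝ) else 0) -
      (if l = j then x₀ (j.succAbove k) / x₀ j else 0) with hV_def
  have hUV : U * V = B := by
    ext i l
    rw [Matrix.mul_apply]
    simp only [hU_def, hV_def, Matrix.of_apply, mul_sub, mul_ite, mul_one, mul_zero]
    rw [Finset.sum_sub_distrib]
    rcases eq_or_ne l j with rfl | hl
    · rw [Finset.sum_congr rfl fun k _ =>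
        if_neg (fun h : l = l.succAbove k => (Fin.succAbove_ne l k) h.symm)]
      rw [Finset.sum_const_zero]
      rw [Finset.sum_congr rfl fun k _ => if_pos rfl]
      have hsum0 : B i l * x₀ l + ∑ k, B i (l.succAbove k) * x₀ (l.succAbove k) = 0 := by
        rw [← Fin.sum_univ_succAbove (fun t => B i t * x₀ t) l]
        exact hBx i
      have h7 : ∑ k, B i (l.succAbove k) * (x₀ (l.succAbove k) / x₀ l)
          = (∑ k, B i (l.succAbove k) * x₀ (l.succAbove k)) / x₀ l := by
        rw [Finset.sum_div]
        exact Finset.sum_congr rfl fun k _ => by ring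
      rw [h7]
      have h8 : ∑ k, B i (l.succAbove k) * x₀ (l.succAbove k) = -(B i l * x₀ l) := by
        linarith
      rw [h8]
      field_simp
      ring
    · obtain ⟨k₀, hk₀⟩ := Fin.exists_succAbove_eq hl
      have hiff : ∀ k : Fin m, (l = j.succAbove k) ↔ (k = k₀) := by
        intro k
        constructor
        · intro h
          apply Fin.succAbove_right_injective (p := j)
          rw [hk₀, ← h]
        · rintro rfl
          exact hk₀.symm
      rw [Finset.sum_congr rfl fun k _ => if_congr (hiff k) rfl rfl]
      rw [Finset.sum_ite_eq' Finset.univ k₀ fun k => B i (j.succAbove k)]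
      rw [Finset.sum_congr rfl fun k _ => if_neg hl, Finset.sum_const_zero]
      simp [hk₀]
  -- value of the construction
  have hBA : B - A = -N := by rw [hB_def]; exact sub_sub_cancel_left A N
  have hent : entNorm p (U * V - A) = vecNorm p (A.mulVec x₀) := by
    rw [hUV, hBA]
    unfold entNorm vecNorm
    congr 1
    have h9 : ∀ i l, |(-N) i l| ^ p = |A.mulVec x₀ i| ^ p * |z l| ^ p := by
      intro i l
      simp only [Matrix.neg_apply, hN_def, Matrix.of_apply, abs_neg, abs_mul]
      rw [Real.mul_rpow (abs_nonneg _) (abs_nonneg _)]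
    calc ∑ i, ∑ l, |(-N) i l| ^ p = ∑ i, ∑ l, |A.mulVec x₀ i| ^ p * |z l| ^ p :=
          Finset.sum_congr rfl fun i _ => Finset.sum_congr rfl fun l _ => h9 i l
      _ = ∑ i, |A.mulVec x₀ i| ^ p := by
          refine Finset.sum_congr rfl fun i _ => ?_
          rw [← Finset.mul_sum, hzpsum, mul_one]
  -- assemble
  have hm0T : vecNorm p (A.mulVec x₀) ∈ {r : ℝ | ∃ (U : Matrix (Fin n) (Fin m) ℝ)
      (V : Matrix (Fin m) (Fin (m + 1)) ℝ), r = entNorm p (U * V - A)} :=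
    ⟨U, V, hent.symm⟩
  have hlbT : ∀ r ∈ {r : ℝ | ∃ (U : Matrix (Fin n) (Fin m) ℝ)
      (V : Matrix (Fin m) (Fin (m + 1)) ℝ), r = entNorm p (U * V - A)},
      vecNorm p (A.mulVec x₀) ≤ r := by
    rintro r ⟨U', V', rfl⟩
    obtain ⟨x, hxne, hVx⟩ := exists_kernel_vec V'
    have hnx : 0 < vecNorm q x := by
      have hpos : 0 < ∑ l, |x l| ^ q := by
        obtain ⟨l, hl⟩ := Function.ne_iff.1 hxne
        refine Finset.sum_pos' (fun t _ => Real.rpow_nonneg (abs_nonneg _) q)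
          ⟨l, Finset.mem_univ l, ?_⟩
        exact Real.rpow_pos_of_pos (abs_pos.2 hl) q
      exact Real.rpow_pos_of_pos hpos _
    set c := (vecNorm q x)⁻¹ with hc_def
    have hc : 0 < c := inv_pos.2 hnx
    have hy : vecNorm q (c • x) = 1 := by
      rw [vecNorm_smul hq0, abs_of_pos hc, hc_def, inv_mul_cancel₀ hnx.ne']
    have hyker : (U' * V').mulVec (c • x) = 0 := by
      rw [← Matrix.mulVec_mulVec, Matrix.mulVec_smul, hVx]
      simp
    have key : A.mulVec (c • x) = -((U' * V' - A).mulVec (c • x)) := by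
      rw [Matrix.sub_mulVec, hyker]
      simp
    calc vecNorm p (A.mulVec x₀) ≤ vecNorm p (A.mulVec (c • x)) := hmin _ hy
      _ = vecNorm p ((U' * V' - A).mulVec (c • x)) := by rw [key, vecNorm_neg]
      _ ≤ entNorm p (U' * V' - A) := vecNorm_mulVec_le hpq _ hy
  have hInf : sInf {r : ℝ | ∃ (U : Matrix (Fin n) (Fin m) ℝ)
      (V : Matrix (Fin m) (Fin (m + 1)) ℝ), r = entNorm p (U * V - A)}
      = vecNorm p (A.mulVec x₀) := IsLeast.csInf_eq ⟨hm0T, hlbT⟩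
  rw [hInf]
  refine ⟨⟨x₀, hx₀, rfl⟩, ?_⟩
  rintro r ⟨y, hy, rfl⟩
  exact hmin y hy
end

section
/- Let p ∈ (1, ∞) with Hölder conjugate p* = p/(p − 1), and let A be an n×d real matrix. Then ‖A Aᵀ‖_{p→p*} = (‖A‖_{2→p*})², where A Aᵀ is the n×n matrix product of A with its transpose. -/
open Matrix

/-- The `r → s` operator norm of a matrix: the supremum of `‖Bx‖_s / ‖x‖_r` over
nonzero vectors `x`. -/
noncomputable def opNorm {m n : ℕ} (r s : ℝ) (B : Matrix (Fin m) (Fin n) ℝ) : ℝ :=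
  sSup {t : ℝ | ∃ x : Fin n → ℝ, x ≠ 0 ∧ t = vecNorm s (B.mulVec x) / vecNorm r x}

lemma vecNorm_nonneg {n : ℕ} (r : ℝ) (v : Fin n → ℝ) : 0 ≤ vecNorm r v :=
  Real.rpow_nonneg (Finset.sum_nonneg fun i _ => Real.rpow_nonneg (abs_nonneg _) r) _

lemma vecNorm_pos {n : ℕ} {r : ℝ} (hr : 0 < r) {v : Fin n → ℝ} (hv : v ≠ 0) :
    0 < vecNorm r v := by
  obtain ⟨j, hj⟩ := Function.ne_iff.mp hv
  apply Real.rpow_pos_of_pos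
  apply Finset.sum_pos' (fun i _ => Real.rpow_nonneg (abs_nonneg _) r)
  exact ⟨j, Finset.mem_univ j, Real.rpow_pos_of_pos (abs_pos.mpr hj) r⟩

lemma vecNorm_zero {n : ℕ} {r : ℝ} (hr : r ≠ 0) : vecNorm r (0 : Fin n → ℝ) = 0 := by
  simp [vecNorm, Real.zero_rpow hr, Real.zero_rpow (inv_ne_zero hr)]

lemma vecNorm_rpow {n : ℕ} {r : ℝ} (hr : r ≠ 0) (v : Fin n → ℝ) :
    vecNorm r v ^ r = ∑ i, |v i| ^ r := by
  rw [vecNorm, ← Real.rpow_mul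
    (Finset.sum_nonneg fun i _ => Real.rpow_nonneg (abs_nonneg _) r)]
  rw [one_div_mul_cancel hr, Real.rpow_one]

lemma holder {p q : ℝ} (hpq : Real.HolderConjugate p q) {n : ℕ} (u v : Fin n → ℝ) :
    ∑ i, u i * v i ≤ vecNorm p u * vecNorm q v :=
  Real.inner_le_Lp_mul_Lq Finset.univ u v hpq

lemma abs_le_vecNorm {n : ℕ} {r : ℝ} (hr : 0 < r) (v : Fin n → ℝ) (j : Fin n) :
    |v j| ≤ vecNorm r v := by
  have h1 : |v j| ^ r ≤ ∑ i, |v i| ^ r :=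
    Finset.single_le_sum (f := fun i => |v i| ^ r)
      (fun i _ => Real.rpow_nonneg (abs_nonneg _) r) (Finset.mem_univ j)
  have h2 := Real.rpow_le_rpow (Real.rpow_nonneg (abs_nonneg _) r) h1
    (le_of_lt (one_div_pos.mpr hr))
  rw [← Real.rpow_mul (abs_nonneg _), mul_one_div_cancel (ne_of_gt hr),
    Real.rpow_one] at h2
  exact h2

lemma opNorm_set_bddAbove {m n : ℕ} {r s : ℝ} (hr : 0 < r) (hs : 0 < s)
    (B : Matrix (Fin m) (Fin n) ℝ) :
    BddAbove {t : ℝ | ∃ x : Fin n → ℝ, x ≠ 0 ∧ t = vecNorm s (B.mulVec x) / vecNorm r x} := by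
  refine ⟨(∑ i, (∑ j, |B i j|) ^ s) ^ (1 / s), ?_⟩
  rintro t ⟨x, hx, rfl⟩
  have hxpos : 0 < vecNorm r x := vecNorm_pos hr hx
  rw [div_le_iff₀ hxpos]
  have hentry : ∀ i, |B.mulVec x i| ≤ (∑ j, |B i j|) * vecNorm r x := by
    intro i
    calc |B.mulVec x i| ≤ ∑ j, |B i j * x j| := by
          simpa [Matrix.mulVec, dotProduct] using
            Finset.abs_sum_le_sum_abs (fun j => B i j * x j) Finset.univ
      _ ≤ ∑ j, |B i j| * vecNorm r x := by
          refine Finset.sum_le_sum fun j _ => ?_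
          rw [abs_mul]
          exact mul_le_mul_of_nonneg_left (abs_le_vecNorm hr x j) (abs_nonneg _)
      _ = (∑ j, |B i j|) * vecNorm r x := by rw [Finset.sum_mul]
  have hsum : ∑ i, |B.mulVec x i| ^ s ≤ ∑ i, ((∑ j, |B i j|) * vecNorm r x) ^ s :=
    Finset.sum_le_sum fun i _ => Real.rpow_le_rpow (abs_nonneg _) (hentry i) (le_of_lt hs)
  have habs : ∀ i : Fin m, (0:ℝ) ≤ ∑ j, |B i j| :=
    fun i => Finset.sum_nonneg fun j _ => abs_nonneg _
  calc vecNorm s (B.mulVec x) ≤ (∑ i, ((∑ j, |B i j|) * vecNorm r x) ^ s) ^ (1 / s) :=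
        Real.rpow_le_rpow (Finset.sum_nonneg fun i _ => Real.rpow_nonneg (abs_nonneg _) s)
          hsum (le_of_lt (one_div_pos.mpr hs))
    _ = ((∑ i, (∑ j, |B i j|) ^ s) * vecNorm r x ^ s) ^ (1 / s) := by
        congr 1
        rw [Finset.sum_mul]
        exact Finset.sum_congr rfl fun i _ =>
          Real.mul_rpow (habs i) (le_of_lt hxpos)
    _ ≤ (∑ i, (∑ j, |B i j|) ^ s) ^ (1 / s) * vecNorm r x := by
        rw [Real.mul_rpow (Finset.sum_nonneg fun i _ => Real.rpow_nonneg (habs i) s)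
          (Real.rpow_nonneg (le_of_lt hxpos) s),
          ← Real.rpow_mul (le_of_lt hxpos), mul_one_div_cancel (ne_of_gt hs), Real.rpow_one]

lemma opNorm_nonneg {m n : ℕ} {r s : ℝ} (hr : 0 < r) (hs : 0 < s)
    (B : Matrix (Fin m) (Fin n) ℝ) : 0 ≤ opNorm r s B := by
  rw [opNorm]
  set S := {t : ℝ | ∃ x : Fin n → ℝ, x ≠ 0 ∧ t = vecNorm s (B.mulVec x) / vecNorm r x}
  rcases Set.eq_empty_or_nonempty S with h | ⟨t, ht⟩
  · rw [h, Real.sSup_empty]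
  · obtain ⟨x, hx, rfl⟩ := ht
    have hmem : vecNorm s (B.mulVec x) / vecNorm r x ∈ S := ⟨x, hx, rfl⟩
    exact le_trans (div_nonneg (vecNorm_nonneg s (B.mulVec x)) (vecNorm_nonneg r x))
      (le_csSup (opNorm_set_bddAbove hr hs B) hmem)

lemma le_opNorm {m n : ℕ} {r s : ℝ} (hr : 0 < r) (hs : 0 < s)
    (B : Matrix (Fin m) (Fin n) ℝ) (x : Fin n → ℝ) :
    vecNorm s (B.mulVec x) ≤ opNorm r s B * vecNorm r x := by
  rcases eq_or_ne x 0 with rfl | hx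
  · rw [Matrix.mulVec_zero, vecNorm_zero (ne_of_gt hs)]
    exact mul_nonneg (opNorm_nonneg hr hs B) (vecNorm_nonneg _ _)
  · have hxpos : 0 < vecNorm r x := vecNorm_pos hr hx
    rw [← div_le_iff₀ hxpos]
    exact le_csSup (opNorm_set_bddAbove hr hs B) ⟨x, hx, rfl⟩

lemma dual_vec {p q : ℝ} (hpq : Real.HolderConjugate p q) {n : ℕ} (v : Fin n → ℝ) :
    ∃ u : Fin n → ℝ, vecNorm p u = vecNorm q v ^ (q - 1) ∧
      ∑ i, u i * v i = vecNorm q v ^ q := by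
  have hq1 : 1 < q := hpq.symm.lt
  have hq0 : q ≠ 0 := hpq.symm.ne_zero
  have hqp : (q - 1) * p = q := hpq.symm.sub_one_mul_conj
  refine ⟨fun i => Real.sign (v i) * |v i| ^ (q - 1), ?_, ?_⟩
  · have habs : ∀ i, |Real.sign (v i) * |v i| ^ (q - 1)| ^ p = |v i| ^ q := by
      intro i
      rcases lt_trichotomy (v i) 0 with h | h | h
      · rw [Real.sign_of_neg h, abs_mul, abs_neg, abs_one, one_mul,
          abs_of_nonneg (Real.rpow_nonneg (abs_nonneg _) _),
          ← Real.rpow_mul (abs_nonneg _), hqp]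
      · rw [h]
        simp [Real.sign_zero, Real.zero_rpow (ne_of_gt hpq.pos),
          Real.zero_rpow hq0]
      · rw [Real.sign_of_pos h, abs_mul, abs_one, one_mul,
          abs_of_nonneg (Real.rpow_nonneg (abs_nonneg _) _),
          ← Real.rpow_mul (abs_nonneg _), hqp]
    rw [vecNorm, Finset.sum_congr rfl (fun i _ => habs i), ← vecNorm_rpow hq0 v,
      ← Real.rpow_mul (vecNorm_nonneg q v)]
    congr 1
    rw [mul_one_div, hpq.symm.div_conj_eq_sub_one]
  · have hterm : ∀ i, Real.sign (v i) * |v i| ^ (q - 1) * v i = |v i| ^ q := by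
      intro i
      rcases eq_or_ne (v i) 0 with h | h
      · rw [h]
        simp [Real.zero_rpow hq0]
      · have habs : |v i| ^ (q - 1) * |v i| = |v i| ^ q := by
          rw [← Real.rpow_add_one (abs_ne_zero.mpr h) (q - 1), sub_add_cancel]
        rcases h.lt_or_gt with hlt | hlt
        · rw [Real.sign_of_neg hlt, ← habs, abs_of_neg hlt]; ring
        · rw [Real.sign_of_pos hlt, ← habs, abs_of_pos hlt]; ring
    rw [Finset.sum_congr rfl (fun i _ => hterm i), ← vecNorm_rpow hq0 v]

lemma key_sq {p q : ℝ} (hpq : Real.HolderConjugate p q) {n d : ℕ}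
    (A : Matrix (Fin n) (Fin d) ℝ) (x : Fin n → ℝ) :
    vecNorm 2 (Aᵀ.mulVec x) ^ (2:ℝ) ≤ vecNorm p x * vecNorm q ((A * Aᵀ).mulVec x) := by
  rw [vecNorm_rpow two_ne_zero]
  have h1 : ∀ j, |Aᵀ.mulVec x j| ^ (2:ℝ) = Aᵀ.mulVec x j * Aᵀ.mulVec x j := by
    intro j
    rw [show (2:ℝ) = ((2:ℕ):ℝ) by norm_num, Real.rpow_natCast, sq_abs, sq]
  have hid : ∑ j, Aᵀ.mulVec x j * Aᵀ.mulVec x j = ∑ i, x i * ((A * Aᵀ).mulVec x) i := by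
    have h2 : ∑ i, x i * ((A * Aᵀ).mulVec x) i = x ⬝ᵥ ((A * Aᵀ) *ᵥ x) := rfl
    rw [h2, ← Matrix.mulVec_mulVec, Matrix.dotProduct_mulVec, ← Matrix.mulVec_transpose]
    rfl
  rw [Finset.sum_congr rfl fun j _ => h1 j, hid]
  exact holder hpq x _

lemma sSup_of_subset_zero {S : Set ℝ} (h : S ⊆ {0}) : sSup S = 0 := by
  rcases Set.subset_singleton_iff_eq.mp h with h | h
  · rw [h]; exact Real.sSup_empty
  · rw [h]; exact csSup_singleton 0

/-- For `p ∈ (1, ∞)` with Hölder conjugate `p* = p/(p-1)`,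
`‖A Aᵀ‖_{p → p*} = ‖A‖_{2 → p*}²`. -/
theorem stmt9 (p : ℝ) (hp : 1 < p) {n d : ℕ} (A : Matrix (Fin n) (Fin d) ℝ) :
    opNorm p (p / (p - 1)) (A * Aᵀ) = (opNorm 2 (p / (p - 1)) A) ^ 2 := by
  set q := p / (p - 1) with hqdef
  have hpq : Real.HolderConjugate p q := Real.HolderConjugate.conjExponent hp
  have hp0 : 0 < p := hpq.pos
  have hq0 : 0 < q := hpq.symm.pos
  have h22 : Real.HolderConjugate 2 2 := Real.holderConjugate_iff.mpr ⟨one_lt_two, by norm_num⟩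
  rcases Nat.eq_zero_or_pos n with hn | hn
  · subst hn
    have hL : opNorm p q (A * Aᵀ) = 0 := by
      rw [opNorm]
      apply sSup_of_subset_zero
      rintro t ⟨x, hx, rfl⟩
      exact absurd (Subsingleton.elim x 0) hx
    have hR : opNorm 2 q A = 0 := by
      rw [opNorm]
      apply sSup_of_subset_zero
      rintro t ⟨x, hx, rfl⟩
      have : A.mulVec x = 0 := Subsingleton.elim _ _
      rw [this, vecNorm_zero (ne_of_gt hq0), zero_div]
      rfl
    rw [hL, hR]; norm_num
  rcases Nat.eq_zero_or_pos d with hd | hd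
  · subst hd
    have hAAT : A * Aᵀ = 0 := by
      ext i k
      simp [Matrix.mul_apply]
    have hL : opNorm p q (A * Aᵀ) = 0 := by
      rw [opNorm]
      apply sSup_of_subset_zero
      rintro t ⟨x, hx, rfl⟩
      rw [hAAT, Matrix.zero_mulVec, vecNorm_zero (ne_of_gt hq0), zero_div]
      rfl
    have hR : opNorm 2 q A = 0 := by
      rw [opNorm]
      apply sSup_of_subset_zero
      rintro t ⟨x, hx, rfl⟩
      exact absurd (Subsingleton.elim x 0) hx
    rw [hL, hR]; norm_num
  -- main case
  have hxne : (fun _ : Fin n => (1:ℝ)) ≠ 0 := by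
    intro h
    have := congrFun h ⟨0, hn⟩
    norm_num at this
  have hyne : (fun _ : Fin d => (1:ℝ)) ≠ 0 := by
    intro h
    have := congrFun h ⟨0, hd⟩
    norm_num at this
  have hb1 : BddAbove {t : ℝ | ∃ x : Fin n → ℝ, x ≠ 0 ∧
      t = vecNorm q ((A * Aᵀ).mulVec x) / vecNorm p x} := opNorm_set_bddAbove hp0 hq0 _
  have hM0 : 0 ≤ opNorm 2 q A := opNorm_nonneg two_pos hq0 A
  have hK0 : 0 ≤ opNorm p 2 Aᵀ := opNorm_nonneg hp0 two_pos Aᵀ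
  have hT0 : 0 ≤ opNorm p q (A * Aᵀ) := opNorm_nonneg hp0 hq0 _
  -- K ≤ M
  have hKM : opNorm p 2 Aᵀ ≤ opNorm 2 q A := by
    rw [opNorm]
    refine csSup_le ⟨_, ⟨fun _ => 1, hxne, rfl⟩⟩ ?_
    rintro t ⟨x, hx, rfl⟩
    rw [div_le_iff₀ (vecNorm_pos hp0 hx)]
    set w := Aᵀ.mulVec x with hw
    rcases eq_or_ne (vecNorm 2 w) 0 with h0 | h0
    · rw [h0]
      exact mul_nonneg hM0 (vecNorm_nonneg _ _)
    · have hpos : 0 < vecNorm 2 w := (vecNorm_nonneg _ _).lt_of_ne (Ne.symm h0)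
      have h1 : vecNorm 2 w ^ (2:ℝ) ≤ vecNorm p x * vecNorm q ((A * Aᵀ).mulVec x) :=
        key_sq hpq A x
      have h2 : (A * Aᵀ).mulVec x = A.mulVec w := by rw [hw, Matrix.mulVec_mulVec]
      rw [h2] at h1
      have h3 : vecNorm q (A.mulVec w) ≤ opNorm 2 q A * vecNorm 2 w :=
        le_opNorm two_pos hq0 A w
      have hsq : vecNorm 2 w ^ (2:ℝ) = vecNorm 2 w * vecNorm 2 w := by
        rw [show (2:ℝ) = ((2:ℕ):ℝ) by norm_num, Real.rpow_natCast, sq]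
      have h4 : vecNorm 2 w * vecNorm 2 w ≤ (opNorm 2 q A * vecNorm p x) * vecNorm 2 w := by
        rw [← hsq]
        calc vecNorm 2 w ^ (2:ℝ) ≤ vecNorm p x * vecNorm q (A.mulVec w) := h1
          _ ≤ vecNorm p x * (opNorm 2 q A * vecNorm 2 w) :=
              mul_le_mul_of_nonneg_left h3 (vecNorm_nonneg p x)
          _ = (opNorm 2 q A * vecNorm p x) * vecNorm 2 w := by ring
      exact le_of_mul_le_mul_right h4 hpos
  -- M ≤ K
  have hMK : opNorm 2 q A ≤ opNorm p 2 Aᵀ := by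
    rw [opNorm]
    refine csSup_le ⟨_, ⟨fun _ => 1, hyne, rfl⟩⟩ ?_
    rintro t ⟨y, hy, rfl⟩
    rw [div_le_iff₀ (vecNorm_pos two_pos hy)]
    set v := A.mulVec y with hv
    obtain ⟨u, hu1, hu2⟩ := dual_vec hpq v
    rcases eq_or_ne (vecNorm q v) 0 with h0 | h0
    · rw [h0]
      exact mul_nonneg hK0 (vecNorm_nonneg _ _)
    · have hvpos : 0 < vecNorm q v := (vecNorm_nonneg _ _).lt_of_ne (Ne.symm h0)
      have hdot : ∑ i, u i * v i = ∑ j, Aᵀ.mulVec u j * y j := by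
        have e1 : ∑ i, u i * v i = u ⬝ᵥ (A *ᵥ y) := rfl
        rw [e1, Matrix.dotProduct_mulVec, ← Matrix.mulVec_transpose]
        rfl
      have hCS : ∑ j, Aᵀ.mulVec u j * y j ≤ vecNorm 2 (Aᵀ.mulVec u) * vecNorm 2 y :=
        holder h22 _ _
      have hAu : vecNorm 2 (Aᵀ.mulVec u) ≤ opNorm p 2 Aᵀ * vecNorm p u :=
        le_opNorm hp0 two_pos Aᵀ u
      have hchain : vecNorm q v ^ q ≤
          (opNorm p 2 Aᵀ * vecNorm 2 y) * vecNorm q v ^ (q - 1) := by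
        calc vecNorm q v ^ q = ∑ i, u i * v i := hu2.symm
          _ = ∑ j, Aᵀ.mulVec u j * y j := hdot
          _ ≤ vecNorm 2 (Aᵀ.mulVec u) * vecNorm 2 y := hCS
          _ ≤ (opNorm p 2 Aᵀ * vecNorm p u) * vecNorm 2 y :=
              mul_le_mul_of_nonneg_right hAu (vecNorm_nonneg 2 y)
          _ = (opNorm p 2 Aᵀ * vecNorm 2 y) * vecNorm q v ^ (q - 1) := by
              rw [hu1]; ring
      have hsplit : vecNorm q v ^ q = vecNorm q v * vecNorm q v ^ (q - 1) := by
        rw [mul_comm, ← Real.rpow_add_one h0 (q - 1), sub_add_cancel]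
      rw [hsplit] at hchain
      exact le_of_mul_le_mul_right hchain (Real.rpow_pos_of_pos hvpos (q - 1))
  have hKMeq : opNorm p 2 Aᵀ = opNorm 2 q A := le_antisymm hKM hMK
  -- T ≤ M * K
  have hT_le : opNorm p q (A * Aᵀ) ≤ opNorm 2 q A * opNorm p 2 Aᵀ := by
    rw [opNorm]
    refine csSup_le ⟨_, ⟨fun _ => 1, hxne, rfl⟩⟩ ?_
    rintro t ⟨x, hx, rfl⟩
    rw [div_le_iff₀ (vecNorm_pos hp0 hx)]
    calc vecNorm q ((A * Aᵀ).mulVec x) = vecNorm q (A.mulVec (Aᵀ.mulVec x)) := by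
          rw [Matrix.mulVec_mulVec]
      _ ≤ opNorm 2 q A * vecNorm 2 (Aᵀ.mulVec x) := le_opNorm two_pos hq0 A _
      _ ≤ opNorm 2 q A * (opNorm p 2 Aᵀ * vecNorm p x) :=
          mul_le_mul_of_nonneg_left (le_opNorm hp0 two_pos Aᵀ x) hM0
      _ = (opNorm 2 q A * opNorm p 2 Aᵀ) * vecNorm p x := by ring
  -- K ≤ sqrt T
  have hK_sqrt : opNorm p 2 Aᵀ ≤ Real.sqrt (opNorm p q (A * Aᵀ)) := by
    rw [opNorm]
    refine csSup_le ⟨_, ⟨fun _ => 1, hxne, rfl⟩⟩ ?_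
    rintro t ⟨x, hx, rfl⟩
    have hxp : 0 < vecNorm p x := vecNorm_pos hp0 hx
    rw [Real.le_sqrt (div_nonneg (vecNorm_nonneg _ _) (vecNorm_nonneg _ _)) hT0]
    rw [div_pow, div_le_iff₀ (pow_pos hxp 2)]
    have h1 : vecNorm 2 (Aᵀ.mulVec x) ^ (2:ℝ) ≤
        vecNorm p x * vecNorm q ((A * Aᵀ).mulVec x) := key_sq hpq A x
    have h1' : vecNorm 2 (Aᵀ.mulVec x) ^ 2 ≤
        vecNorm p x * vecNorm q ((A * Aᵀ).mulVec x) := by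
      rwa [show (2:ℝ) = ((2:ℕ):ℝ) by norm_num, Real.rpow_natCast] at h1
    have hmem : vecNorm q ((A * Aᵀ).mulVec x) / vecNorm p x ≤ opNorm p q (A * Aᵀ) :=
      le_csSup hb1 ⟨x, hx, rfl⟩
    rw [div_le_iff₀ hxp] at hmem
    calc vecNorm 2 (Aᵀ.mulVec x) ^ 2 ≤ vecNorm p x * vecNorm q ((A * Aᵀ).mulVec x) := h1'
      _ ≤ vecNorm p x * (opNorm p q (A * Aᵀ) * vecNorm p x) :=
          mul_le_mul_of_nonneg_left hmem hxp.le
      _ = opNorm p q (A * Aᵀ) * vecNorm p x ^ 2 := by ring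
  have hK2 : opNorm p 2 Aᵀ ^ 2 ≤ opNorm p q (A * Aᵀ) := by
    have := pow_le_pow_left₀ hK0 hK_sqrt 2
    rwa [Real.sq_sqrt hT0] at this
  have hfin1 : opNorm p q (A * Aᵀ) ≤ opNorm 2 q A ^ 2 := by
    calc opNorm p q (A * Aᵀ) ≤ opNorm 2 q A * opNorm p 2 Aᵀ := hT_le
      _ = opNorm 2 q A ^ 2 := by rw [hKMeq]; ring
  have hfin2 : opNorm 2 q A ^ 2 ≤ opNorm p q (A * Aᵀ) := by
    calc opNorm 2 q A ^ 2 = opNorm p 2 Aᵀ ^ 2 := by rw [hKMeq]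
      _ ≤ opNorm p q (A * Aᵀ) := hK2
  linarith
end

section
/- Let 𝔽 be a finite field and let A ∈ 𝔽^{n×d} with n ≥ d ≥ 1, and set k = d − 1. Then the minimum over all U ∈ 𝔽^{n×k} and V ∈ 𝔽^{k×d} of ‖UV − A‖₀ equals the minimum over all nonzero x ∈ 𝔽^d of ‖Ax‖₀. -/
/-- For any nonzero `x`, there is a factorization `U*V` (inner dim `m`) with
`‖UV - A‖₀ = ‖Ax‖₀`. -/
lemma stmt12_exists_UV (F : Type) [Field F] [DecidableEq F]
    {n m : ℕ} (A : Matrix (Fin n) (Fin (m+1)) F) (x : Fin (m+1) → F) (hx : x ≠ 0) :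
    ∃ (U : Matrix (Fin n) (Fin m) F) (V : Matrix (Fin m) (Fin (m+1)) F),
      Nat.card {p : Fin n × Fin (m+1) // (U * V - A) p.1 p.2 ≠ 0} =
      Nat.card {i : Fin n // A.mulVec x i ≠ 0} := by
  obtain ⟨j, hj⟩ : ∃ j, x j ≠ 0 := by
    by_contra h
    push_neg at h
    exact hx (funext h)
  refine ⟨fun r t => A r (j.succAbove t),
    fun t i => if i = j then -(x j)⁻¹ * x (j.succAbove t)
      else if i = j.succAbove t then 1 else 0, ?_⟩
  set U : Matrix (Fin n) (Fin m) F := fun r t => A r (j.succAbove t) with hU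
  set V : Matrix (Fin m) (Fin (m+1)) F := fun t i =>
      if i = j then -(x j)⁻¹ * x (j.succAbove t)
      else if i = j.succAbove t then 1 else 0 with hV
  have key : ∀ r i, (U * V - A) r i =
      if i = j then -(x j)⁻¹ * (A.mulVec x r) else 0 := by
    intro r i
    have hmul : (U * V) r i = ∑ t, A r (j.succAbove t) * V t i := by
      rw [Matrix.mul_apply]
    by_cases hij : i = j
    · subst hij
      have hAx : A.mulVec x r = A r i * x i + ∑ t, A r (i.succAbove t) * x (i.succAbove t) := by
        rw [Matrix.mulVec, dotProduct, Fin.sum_univ_succAbove (fun k => A r k * x k) i]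
      rw [Matrix.sub_apply, hmul, if_pos rfl, hAx]
      have hs : ∑ t, A r (i.succAbove t) * V t i =
          -(x i)⁻¹ * ∑ t, A r (i.succAbove t) * x (i.succAbove t) := by
        rw [Finset.mul_sum]
        exact Finset.sum_congr rfl (fun t _ => by rw [hV]; simp only [if_pos rfl, if_true]; ring)
      rw [hs]
      field_simp
      ring
    · obtain ⟨t₀, ht₀⟩ := Fin.exists_succAbove_eq (Ne.symm (Ne.symm hij))
      have hsum : (U * V) r i = A r i := by
        rw [hmul]
        rw [Finset.sum_eq_single t₀]
        · subst ht₀; rw [hV]; simp [Fin.succAbove_ne]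
        · intro t _ ht
          have h1 : i ≠ j.succAbove t := by
            intro h
            exact ht (j.succAbove_right_injective (ht₀.trans h)).symm
          rw [hV]; simp [if_neg hij, if_neg h1]
        · intro h; exact absurd (Finset.mem_univ t₀) h
      simp [Matrix.sub_apply, hsum, hij]
  refine Nat.card_congr ⟨fun p => ⟨p.1.1, ?_⟩, fun r => ⟨(r.1, j), ?_⟩, ?_, ?_⟩
  · obtain ⟨⟨r, i⟩, hp⟩ := p
    simp only [key] at hp
    by_cases hij : i = j
    · rw [if_pos hij] at hp
      intro h; apply hp; rw [h, mul_zero]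
    · rw [if_neg hij] at hp
      exact absurd rfl hp
  · obtain ⟨r, hr⟩ := r
    simp only [key, if_pos rfl]
    exact mul_ne_zero (neg_ne_zero.mpr (inv_ne_zero hj)) hr
  · rintro ⟨⟨r, i⟩, hp⟩
    have hij : i = j := by
      by_contra hij
      simp only [key, if_neg hij] at hp
      exact hp rfl
    simp [hij]
  · rintro ⟨r, hr⟩
    rfl

lemma stmt12_exists_x (F : Type) [Field F] [DecidableEq F]
    {n d : ℕ} (hd : 1 ≤ d) (A : Matrix (Fin n) (Fin d) F)
    (U : Matrix (Fin n) (Fin (d-1)) F) (V : Matrix (Fin (d-1)) (Fin d) F) :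
    ∃ x : Fin d → F, x ≠ 0 ∧
      Nat.card {i : Fin n // A.mulVec x i ≠ 0} ≤
      Nat.card {p : Fin n × Fin d // (U * V - A) p.1 p.2 ≠ 0} := by
  have hninj : ¬ Function.Injective V.mulVecLin := by
    intro h
    have := LinearMap.finrank_le_finrank_of_injective h
    rw [Module.finrank_fin_fun, Module.finrank_fin_fun] at this
    omega
  rw [Function.not_injective_iff] at hninj
  obtain ⟨a, b, hab, hne⟩ := hninj
  refine ⟨a - b, sub_ne_zero.mpr hne, ?_⟩
  set x := a - b with hxdef
  have hVx : V.mulVec x = 0 := by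
    have : V.mulVecLin (a - b) = 0 := by rw [map_sub, hab, sub_self]
    simpa [Matrix.mulVecLin_apply] using this
  set M := U * V - A with hM
  have hMx : M.mulVec x = -(A.mulVec x) := by
    rw [hM, Matrix.sub_mulVec, ← Matrix.mulVec_mulVec, hVx]
    simp
  have hkey : ∀ i : Fin n, A.mulVec x i ≠ 0 → ∃ j, M i j ≠ 0 := by
    intro i hi
    have : M.mulVec x i ≠ 0 := by rw [hMx]; simpa using hi
    rw [Matrix.mulVec, dotProduct] at this
    obtain ⟨j, _, hj⟩ := Finset.exists_ne_zero_of_sum_ne_zero this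
    exact ⟨j, fun h => hj (by rw [h, zero_mul])⟩
  classical
  refine Nat.card_le_card_of_injective
    (fun i => ⟨(i.1, (hkey i.1 i.2).choose), (hkey i.1 i.2).choose_spec⟩) ?_
  intro i₁ i₂ h
  apply Subtype.ext
  exact congrArg (fun p => p.1.1) h

theorem stmt12 (F : Type) [Field F] [Fintype F] [DecidableEq F]
    {n d : ℕ} (hd : 1 ≤ d) (hnd : d ≤ n) (A : Matrix (Fin n) (Fin d) F) :
    sInf {c : ℕ | ∃ (U : Matrix (Fin n) (Fin (d - 1)) F)
        (V : Matrix (Fin (d - 1)) (Fin d) F),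
        c = Nat.card {p : Fin n × Fin d // (U * V - A) p.1 p.2 ≠ 0}} =
    sInf {c : ℕ | ∃ x : Fin d → F, x ≠ 0 ∧
        c = Nat.card {i : Fin n // A.mulVec x i ≠ 0}} := by
  obtain ⟨m, rfl⟩ := Nat.exists_eq_succ_of_ne_zero (by omega : d ≠ 0)
  set S : Set ℕ := {c : ℕ | ∃ (U : Matrix (Fin n) (Fin (m + 1 - 1)) F)
        (V : Matrix (Fin (m + 1 - 1)) (Fin (m+1)) F),
        c = Nat.card {p : Fin n × Fin (m+1) // (U * V - A) p.1 p.2 ≠ 0}} with hS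
  set T : Set ℕ := {c : ℕ | ∃ x : Fin (m+1) → F, x ≠ 0 ∧
        c = Nat.card {i : Fin n // A.mulVec x i ≠ 0}} with hT
  have hTne : T.Nonempty := by
    refine ⟨_, fun _ => 1, fun h => ?_, rfl⟩
    have := congrFun h 0
    simp at this
  have hSne : S.Nonempty := ⟨_, 0, 0, rfl⟩
  apply le_antisymm
  · -- sInf S ≤ sInf T : T ⊆ S
    have hmem := Nat.sInf_mem hTne
    obtain ⟨x, hx, hc⟩ := hmem
    obtain ⟨U, V, hUV⟩ := stmt12_exists_UV F A x hx
    exact Nat.sInf_le ⟨U, V, by rw [hc, hUV]⟩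
  · have hmem := Nat.sInf_mem hSne
    obtain ⟨U, V, hc⟩ := hmem
    obtain ⟨x, hx, hle⟩ := stmt12_exists_x F (by omega) A U V
    calc sInf T ≤ Nat.card {i : Fin n // A.mulVec x i ≠ 0} := Nat.sInf_le ⟨x, hx, rfl⟩
      _ ≤ sInf S := by rw [hc]; exact hle
end

section
/- Let G be a d-regular graph (d ≥ 1) on a finite vertex set V, identified with its normalized adjacency matrix (the adjacency matrix divided by d). Let q ∈ (2, ∞), λ ∈ (0, 1), δ > 0 and ε > 0. If ‖P_{≥λ}(G)‖_{2→q} ≤ ε / δ^{(q−2)/(2q)}, then Φ_G(δ) ≥ 1 − λ − ε². -/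
open Finset

/-- The expectation `r`-norm of a function on a finite vertex set:
`(E_{x ∈ V} |f x|^r)^{1/r}`. -/
noncomputable def eNorm {V : Type} [Fintype V] (r : ℝ) (f : V → ℝ) : ℝ :=
  ((∑ x, |f x| ^ r) / (Fintype.card V : ℝ)) ^ (1 / r)

/-- The number of (ordered) edge endpoints leaving `S`: the number of pairs
`(u, v)` with `u ∈ S`, `v ∉ S` and `u ~ v`. -/
def eBoundary {V : Type} [Fintype V] [DecidableEq V] (G : SimpleGraph V)
    [DecidableRel G.Adj] (S : Finset V) : ℕ :=
  (Finset.univ.filter fun p : V × V => p.1 ∈ S ∧ p.2 ∉ S ∧ G.Adj p.1 p.2).card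

/-- The span of the eigenvectors of the normalized adjacency matrix of `G` with
eigenvalue at least `lam`. -/
noncomputable def topEigenspace {V : Type} [Fintype V] [DecidableEq V]
    (G : SimpleGraph V) [DecidableRel G.Adj] (dreg : ℕ) (lam : ℝ) :
    Submodule ℝ (V → ℝ) :=
  Submodule.span ℝ {f : V → ℝ | ∃ c : ℝ, lam ≤ c ∧
    ((dreg : ℝ)⁻¹ • G.adjMatrix ℝ).mulVec f = c • f}

open Matrix
set_option linter.unusedSectionVars false
set_option linter.unusedVariables false
set_option linter.unnecessarySeqFocus false

variable {V : Type} [Fintype V] [DecidableEq V]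

lemma Mspan (G : SimpleGraph V) [DecidableRel G.Adj] (dreg : ℕ) (lam : ℝ)
    {g : V → ℝ} (hg : g ∈ topEigenspace G dreg lam) :
    ((dreg : ℝ)⁻¹ • G.adjMatrix ℝ) *ᵥ g ∈ topEigenspace G dreg lam := by
  induction hg using Submodule.span_induction with
  | mem x hx =>
      obtain ⟨c, -, hc⟩ := id hx
      rw [hc]
      exact Submodule.smul_mem _ _ (Submodule.subset_span hx)
  | zero => rw [Matrix.mulVec_zero]; exact Submodule.zero_mem _
  | add x y _ _ hx hy => rw [Matrix.mulVec_add]; exact Submodule.add_mem _ hx hy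
  | smul c x _ hx => rw [Matrix.mulVec_smul]; exact Submodule.smul_mem _ _ hx

lemma isHerm (G : SimpleGraph V) [DecidableRel G.Adj] (dreg : ℕ) :
    ((dreg : ℝ)⁻¹ • G.adjMatrix ℝ).IsHermitian := by
  unfold Matrix.IsHermitian
  rw [conjTranspose_smul]
  congr 1
  ext i j
  simp [Matrix.conjTranspose_apply, SimpleGraph.adjMatrix_apply, G.adj_comm]

lemma sym_sum' (G : SimpleGraph V) [DecidableRel G.Adj] (d : ℝ)
    (g h : V → ℝ) :
    ∑ x, g x * ((d⁻¹ • G.adjMatrix ℝ) *ᵥ h) x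
      = ∑ x, ((d⁻¹ • G.adjMatrix ℝ) *ᵥ g) x * h x := by
  simp only [Matrix.mulVec, dotProduct, Matrix.smul_apply, smul_eq_mul,
    Finset.mul_sum, Finset.sum_mul]
  rw [Finset.sum_comm]
  apply Finset.sum_congr rfl
  intro x _
  apply Finset.sum_congr rfl
  intro y _
  rw [show (SimpleGraph.adjMatrix ℝ G) y x = (SimpleGraph.adjMatrix ℝ G) x y by
    simp [SimpleGraph.adjMatrix_apply, G.adj_comm]]
  ring

lemma spectral (G : SimpleGraph V) [DecidableRel G.Adj] (dreg : ℕ) (lam : ℝ)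
    (hlam : 0 < lam)
    (h : V → ℝ) (horth : ∀ g ∈ topEigenspace G dreg lam, ∑ x, h x * g x = 0) :
    ∑ x, h x * (((dreg : ℝ)⁻¹ • G.adjMatrix ℝ) *ᵥ h) x ≤ lam * ∑ x, h x * h x := by
  set M := ((dreg : ℝ)⁻¹ • G.adjMatrix ℝ) with hM
  have hHerm : M.IsHermitian := isHerm G dreg
  set b := hHerm.eigenvectorBasis with hb
  set ev := hHerm.eigenvalues with hev
  -- view as EuclideanSpace
  let h' : EuclideanSpace ℝ V := WithLp.toLp 2 h
  let Mh' : EuclideanSpace ℝ V := WithLp.toLp 2 (M *ᵥ h)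
  have inner_eq : ∀ (u w : EuclideanSpace ℝ V), (inner ℝ u w) = ∑ x, u x * w x := by
    intro u w
    simp [PiLp.inner_apply, RCLike.inner_apply, mul_comm]
  have key : ∀ i : V, (inner ℝ (b i) Mh') = ev i * (inner ℝ (b i) h') := by
    intro i
    rw [inner_eq, inner_eq]
    calc ∑ x, (b i : EuclideanSpace ℝ V) x * Mh' x
        = ∑ x, (M *ᵥ (b i : V → ℝ)) x * h x := by
          rw [← sym_sum' G (dreg:ℝ) (b i : V → ℝ) h]
      _ = ∑ x, (ev i • (b i : V → ℝ)) x * h x := by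
          rw [show M *ᵥ (b i : V → ℝ) = ev i • (b i : V → ℝ) from
            hHerm.mulVec_eigenvectorBasis i]
      _ = ev i * ∑ x, (b i : EuclideanSpace ℝ V) x * h x := by
          simp [Finset.mul_sum, mul_assoc]
  have czero : ∀ i : V, lam ≤ ev i → (inner ℝ (b i) h') = 0 := by
    intro i hle
    have hmem : (b i : V → ℝ) ∈ topEigenspace G dreg lam := by
      apply Submodule.subset_span
      exact ⟨ev i, hle, hHerm.mulVec_eigenvectorBasis i⟩
    rw [inner_eq]
    have := horth _ hmem
    calc ∑ x, (b i : EuclideanSpace ℝ V) x * h x = ∑ x, h x * (b i : V → ℝ) x := by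
          apply Finset.sum_congr rfl; intro x _; ring
      _ = 0 := this
  have expand : ∑ x, h x * (M *ᵥ h) x = ∑ i, ev i * ((inner ℝ (b i) h'))^2 := by
    have := b.sum_inner_mul_inner h' Mh'
    rw [inner_eq h' Mh'] at this
    rw [← this]
    apply Finset.sum_congr rfl
    intro i _
    rw [key i, real_inner_comm h' (b i)]
    ring
  have expand2 : ∑ x, h x * h x = ∑ i, ((inner ℝ (b i) h'))^2 := by
    have := b.sum_inner_mul_inner h' h'
    rw [inner_eq h' h'] at this
    rw [← this]
    apply Finset.sum_congr rfl
    intro i _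
    rw [real_inner_comm h' (b i)]
    ring
  rw [expand, expand2, Finset.mul_sum]
  apply Finset.sum_le_sum
  intro i _
  by_cases hle : lam ≤ ev i
  · rw [czero i hle]; simp
  · push_neg at hle
    exact mul_le_mul_of_nonneg_right hle.le (sq_nonneg _)

lemma mulVec_sum (G : SimpleGraph V) [DecidableRel G.Adj] (dreg : ℕ) (h : V → ℝ) :
    ∑ x, h x * (((dreg : ℝ)⁻¹ • G.adjMatrix ℝ) *ᵥ h) x
      = (dreg : ℝ)⁻¹ * ∑ x, ∑ y, (if G.Adj x y then h x * h y else 0) := by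
  rw [Finset.mul_sum]
  apply Finset.sum_congr rfl
  intro x _
  rw [Matrix.smul_mulVec, Pi.smul_apply, smul_eq_mul,
    SimpleGraph.adjMatrix_mulVec_apply]
  rw [SimpleGraph.neighborFinset_eq_filter, Finset.sum_filter]
  simp only [Finset.mul_sum]
  apply Finset.sum_congr rfl
  intro y _
  by_cases hxy : G.Adj x y <;> simp [hxy] <;> ring_nf

lemma adj_sq_sum (G : SimpleGraph V) [DecidableRel G.Adj] (dreg : ℕ)
    (hreg : G.IsRegularOfDegree dreg) (h : V → ℝ) :
    ∑ x, ∑ y, (if G.Adj x y then h x ^ 2 else 0) = (dreg : ℝ) * ∑ x, h x ^ 2 := by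
  rw [Finset.mul_sum]
  apply Finset.sum_congr rfl
  intro x _
  have hcard : (univ.filter (fun y => G.Adj x y)).card = dreg := by
    rw [← SimpleGraph.neighborFinset_eq_filter]; exact hreg x
  rw [← Finset.sum_filter, Finset.sum_const, hcard]
  simp [mul_comm]

lemma adj_swap (G : SimpleGraph V) [DecidableRel G.Adj] (k : V → V → ℝ) :
    ∑ x, ∑ y, (if G.Adj x y then k x y else 0)
      = ∑ x, ∑ y, (if G.Adj x y then k y x else 0) := by
  rw [Finset.sum_comm]
  apply Finset.sum_congr rfl
  intro x _
  apply Finset.sum_congr rfl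
  intro y _
  by_cases hxy : G.Adj x y
  · simp [hxy, hxy.symm]
  · have : ¬ G.Adj y x := fun hc => hxy hc.symm
    simp [hxy, this]

lemma mulVec_le_self (G : SimpleGraph V) [DecidableRel G.Adj] (dreg : ℕ)
    (hd : 1 ≤ dreg) (hreg : G.IsRegularOfDegree dreg) (h : V → ℝ) :
    ∑ x, h x * (((dreg : ℝ)⁻¹ • G.adjMatrix ℝ) *ᵥ h) x ≤ ∑ x, h x * h x := by
  rw [_root_.mulVec_sum]
  have hd0 : (0:ℝ) < (dreg : ℝ) := by exact_mod_cast hd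
  have step : ∑ x, ∑ y, (if G.Adj x y then h x * h y else 0)
      ≤ (dreg : ℝ) * ∑ x, h x ^ 2 := by
    have hle : ∑ x, ∑ y, (if G.Adj x y then h x * h y else 0)
        ≤ ∑ x, ∑ y, (if G.Adj x y then (h x ^ 2 + h y ^ 2)/2 else 0) := by
      apply Finset.sum_le_sum; intro x _
      apply Finset.sum_le_sum; intro y _
      by_cases hxy : G.Adj x y
      · simp only [hxy, if_true]
        nlinarith [sq_nonneg (h x - h y)]
      · simp [hxy]
    refine hle.trans ?_
    have split : ∑ x, ∑ y, (if G.Adj x y then (h x ^ 2 + h y ^ 2)/2 else 0)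
        = ((∑ x, ∑ y, (if G.Adj x y then h x ^ 2 else 0))
          + (∑ x, ∑ y, (if G.Adj x y then h y ^ 2 else 0)))/2 := by
      rw [← Finset.sum_add_distrib, Finset.sum_div]
      apply Finset.sum_congr rfl; intro x _
      rw [← Finset.sum_add_distrib, Finset.sum_div]
      apply Finset.sum_congr rfl; intro y _
      by_cases hxy : G.Adj x y <;> simp [hxy]
    rw [split, adj_swap G (fun x y => h y ^ 2)]
    simp only [adj_sq_sum G dreg hreg h]
    ring_nf
    exact le_refl _
  calc (dreg : ℝ)⁻¹ * ∑ x, ∑ y, (if G.Adj x y then h x * h y else 0)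
      ≤ (dreg : ℝ)⁻¹ * ((dreg : ℝ) * ∑ x, h x ^ 2) := by
        apply mul_le_mul_of_nonneg_left step (by positivity)
    _ = ∑ x, h x * h x := by
        rw [← mul_assoc, inv_mul_cancel₀ hd0.ne', one_mul]
        apply Finset.sum_congr rfl; intro x _; ring

lemma eBoundary_sum (G : SimpleGraph V) [DecidableRel G.Adj] (S : Finset V) :
    (eBoundary G S : ℝ)
      = ∑ x, ∑ y, (if x ∈ S ∧ y ∉ S ∧ G.Adj x y then (1:ℝ) else 0) := by
  unfold eBoundary
  rw [Finset.card_filter]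
  push_cast
  rw [Fintype.sum_prod_type]

lemma edge_count (G : SimpleGraph V) [DecidableRel G.Adj] (dreg : ℕ)
    (hd : 1 ≤ dreg) (hreg : G.IsRegularOfDegree dreg) (S : Finset V) :
    ∑ x, (fun x => if x ∈ S then (1:ℝ) else 0) x
        * (((dreg : ℝ)⁻¹ • G.adjMatrix ℝ) *ᵥ (fun x => if x ∈ S then (1:ℝ) else 0)) x
      = ((dreg : ℝ) * S.card - eBoundary G S) / dreg := by
  set f : V → ℝ := fun x => if x ∈ S then (1:ℝ) else 0 with hf
  have hd0 : (0:ℝ) < (dreg : ℝ) := by exact_mod_cast hd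
  rw [_root_.mulVec_sum]
  have sub1 : ∑ x, ∑ y, (if G.Adj x y then f x else 0) = (dreg : ℝ) * S.card := by
    have : ∀ x, ∑ y, (if G.Adj x y then f x else 0) = (dreg : ℝ) * f x := by
      intro x
      rw [← Finset.sum_filter, Finset.sum_const]
      have hcard : (univ.filter (fun y => G.Adj x y)).card = dreg := by
        rw [← SimpleGraph.neighborFinset_eq_filter]; exact hreg x
      rw [hcard]; simp
    rw [Finset.sum_congr rfl (fun x _ => this x), ← Finset.mul_sum]
    congr 1
    rw [hf]
    simp [Finset.sum_ite_mem]
  have key : ∑ x, ∑ y, (if G.Adj x y then f x * f y else 0)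
      = (dreg : ℝ) * S.card - eBoundary G S := by
    rw [← sub1, eBoundary_sum, ← Finset.sum_sub_distrib]
    apply Finset.sum_congr rfl; intro x _
    rw [← Finset.sum_sub_distrib]
    apply Finset.sum_congr rfl; intro y _
    by_cases hx : x ∈ S <;> by_cases hy : y ∈ S <;> by_cases hxy : G.Adj x y <;>
      simp [hf, hx, hy, hxy]
  rw [key]
  field_simp

set_option maxHeartbeats 1600000 in
/-- If the `2 → q` (expectation) norm of the projection `P_{≥λ}(G)`
is at most `ε / δ^{(q-2)/(2q)}`, then every nonempty set of measure at most `δ` has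
expansion at least `1 − λ − ε²`. -/
theorem stmt13 {V : Type} [Fintype V] [DecidableEq V] [Nonempty V]
    (G : SimpleGraph V) [DecidableRel G.Adj]
    (dreg : ℕ) (hd : 1 ≤ dreg) (hreg : G.IsRegularOfDegree dreg)
    (q lam δ ε : ℝ) (hq : 2 < q) (hlam0 : 0 < lam) (hlam1 : lam < 1)
    (hδ : 0 < δ) (hε : 0 < ε)
    (P : (V → ℝ) →ₗ[ℝ] (V → ℝ))
    (hPmem : ∀ f, P f ∈ topEigenspace G dreg lam)
    (hPfix : ∀ f ∈ topEigenspace G dreg lam, P f = f)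
    (hPorth : ∀ f : V → ℝ, ∀ g ∈ topEigenspace G dreg lam, ∑ x, (f x - P f x) * g x = 0)
    (hnorm : ∀ f : V → ℝ, eNorm q (P f) ≤ (ε / δ ^ ((q - 2) / (2 * q))) * eNorm 2 f) :
    ∀ S : Finset V, S.Nonempty → (S.card : ℝ) / (Fintype.card V : ℝ) ≤ δ →
      1 - lam - ε ^ 2 ≤ (eBoundary G S : ℝ) / ((dreg : ℝ) * S.card) := by
  intro S hSne hSμ
  have hd0 : (0:ℝ) < (dreg : ℝ) := by exact_mod_cast hd
  have hn : (0:ℝ) < (Fintype.card V : ℝ) := by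
    exact_mod_cast Fintype.card_pos
  have hs : (0:ℝ) < (S.card : ℝ) := by exact_mod_cast hSne.card_pos
  set n : ℝ := (Fintype.card V : ℝ) with hndef
  set s : ℝ := (S.card : ℝ) with hsdef
  set M : Matrix V V ℝ := ((dreg : ℝ)⁻¹ • G.adjMatrix ℝ) with hMdef
  set f : V → ℝ := fun x => if x ∈ S then (1:ℝ) else 0 with hfdef
  set f' : V → ℝ := P f with hf'def
  set g : V → ℝ := fun x => f x - f' x with hgdef
  have hg_eq : ∀ x, g x = f x - P f x := fun x => rfl
  have o : ∀ u ∈ topEigenspace G dreg lam, ∑ x, g x * u x = 0 := by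
    intro u hu
    simpa using hPorth f u hu
  -- orthogonality of g and f'
  have ogf' : ∑ x, g x * f' x = 0 := o f' (hPmem f)
  -- Pythagoras
  have hff : ∑ x, f x * f x = s := by
    rw [hfdef, hsdef]
    simp [ite_and, Finset.sum_ite_mem]
  have pyth : ∑ x, f x * f x = ∑ x, f' x * f' x + ∑ x, g x * g x := by
    have expand : ∀ x, f x * f x = f' x * f' x + g x * g x + 2 * (g x * f' x) := by
      intro x
      have : f x = f' x + g x := by rw [hgdef]; ring
      rw [this]; ring
    rw [Finset.sum_congr rfl (fun x _ => expand x)]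
    rw [Finset.sum_add_distrib, Finset.sum_add_distrib, ← Finset.mul_sum, ogf']
    ring
  have hf'sq_nonneg : (0:ℝ) ≤ ∑ x, f' x * f' x := by
    apply Finset.sum_nonneg; intro x _; exact mul_self_nonneg _
  have hgsq_nonneg : (0:ℝ) ≤ ∑ x, g x * g x := by
    apply Finset.sum_nonneg; intro x _; exact mul_self_nonneg _
  have hgsq_le : ∑ x, g x * g x ≤ s := by
    rw [← hff, pyth]; linarith
  -- decomposition of the quadratic form
  have decomp : ∑ x, f x * (M *ᵥ f) x
      = ∑ x, f' x * (M *ᵥ f') x + ∑ x, g x * (M *ᵥ g) x := by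
    have hsplit : f = f' + g := by
      funext x; simp only [Pi.add_apply, hgdef]; ring
    have hMsplit : M *ᵥ f = M *ᵥ f' + M *ᵥ g := by rw [hsplit, Matrix.mulVec_add]
    have cross1 : ∑ x, g x * (M *ᵥ f') x = 0 := o _ (Mspan G dreg lam (hPmem f))
    have cross2 : ∑ x, f' x * (M *ᵥ g) x = 0 := by
      rw [hMdef]
      rw [sym_sum' G (dreg:ℝ) f' g]
      rw [← cross1]
      apply Finset.sum_congr rfl; intro x _; rw [hMdef]; ring
    calc ∑ x, f x * (M *ᵥ f) x
        = ∑ x, (f' x * (M *ᵥ f') x + g x * (M *ᵥ g) x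
            + (f' x * (M *ᵥ g) x + g x * (M *ᵥ f') x)) := by
          rw [hMsplit, hsplit]
          apply Finset.sum_congr rfl; intro x _
          simp only [Pi.add_apply]; ring
      _ = ∑ x, f' x * (M *ᵥ f') x + ∑ x, g x * (M *ᵥ g) x := by
          rw [Finset.sum_add_distrib, Finset.sum_add_distrib, Finset.sum_add_distrib, cross2, cross1]
          ring
  -- bounds on the two pieces
  have bound1 : ∑ x, f' x * (M *ᵥ f') x ≤ ∑ x, f' x * f' x :=
    mulVec_le_self G dreg hd hreg f'
  have bound2 : ∑ x, g x * (M *ᵥ g) x ≤ lam * ∑ x, g x * g x :=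
    spectral G dreg lam hlam0 g o
  -- Hölder step
  have holder : ∑ x, f' x * f' x ≤ ε ^ 2 * s := by
    have hq0 : (0:ℝ) < q := by linarith
    have hq1 : (0:ℝ) < q - 1 := by linarith
    set p : ℝ := q / (q - 1) with hpdef
    have hp1 : 1 < p := by
      rw [hpdef]
      rw [lt_div_iff₀ hq1]; linarith
    have hpq : Real.HolderConjugate p q := by
      exact (Real.HolderConjugate.conjExponent (by linarith : (1:ℝ) < q)).symm
    set α : ℝ := (q - 2) / (2 * q) with hαdef
    have hα0 : 0 ≤ α := by
      rw [hαdef]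
      apply div_nonneg (by linarith) (by linarith)
    set K : ℝ := ε / δ ^ α with hKdef
    have hK0 : 0 < K := by
      rw [hKdef]
      apply div_pos hε (Real.rpow_pos_of_pos hδ α)
    set T2 : ℝ := ∑ x, f' x * f' x with hT2def
    set t : ℝ := eNorm 2 f' with htdef
    have habs2 : ∀ a : ℝ, |a| ^ (2:ℝ) = a * a := by
      intro a
      rw [show (2:ℝ) = ((2:ℕ):ℝ) by norm_num, Real.rpow_natCast, sq_abs, sq]
    have ht_eq : t = (T2 / n) ^ ((1:ℝ)/2) := by
      rw [htdef]
      unfold eNorm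
      rw [hT2def, hndef]
      congr 2
      apply Finset.sum_congr rfl; intro x _; exact habs2 (f' x)
    have hT2_nonneg : 0 ≤ T2 := hf'sq_nonneg
    have ht_nonneg : 0 ≤ t := by
      rw [ht_eq]; positivity
    have ht_sq : t ^ 2 = T2 / n := by
      rw [ht_eq, ← Real.rpow_natCast ((T2/n) ^ ((1:ℝ)/2)) 2,
        ← Real.rpow_mul (by positivity)]
      norm_num
    have hT2_eq : T2 = n * t ^ 2 := by
      rw [ht_sq]; field_simp
    -- step 1 : T2 = ⟨f, f'⟩
    have step1 : T2 = ∑ x, f x * f' x := by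
      have hsub : ∑ x, f x * f' x - ∑ x, f' x * f' x = 0 := by
        rw [← Finset.sum_sub_distrib, ← ogf']
        apply Finset.sum_congr rfl; intro x _
        rw [hgdef]; ring
      rw [hT2def]; linarith
    -- step 2 : Hölder
    have step2 : ∑ x, f x * f' x
        ≤ (∑ x, |f x| ^ p) ^ (1/p) * (∑ x, |f' x| ^ q) ^ (1/q) :=
      Real.inner_le_Lp_mul_Lq univ f f' hpq
    -- step 3 : ∑ |f|^p = s
    have step3 : ∑ x, |f x| ^ p = s := by
      have : ∀ x, |f x| ^ p = if x ∈ S then (1:ℝ) else 0 := by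
        intro x
        rw [hfdef]
        by_cases hx : x ∈ S
        · simp [hx, Real.one_rpow]
        · have hp0 : p ≠ 0 := by
            have : (0:ℝ) < p := by linarith
            exact this.ne'
          simp [hx, Real.zero_rpow hp0]
      rw [Finset.sum_congr rfl (fun x _ => this x), hsdef]
      simp [Finset.sum_ite_mem]
    -- step 4 : relate q-sum to eNorm
    have hAq_nonneg : 0 ≤ ∑ x, |f' x| ^ q := by
      apply Finset.sum_nonneg; intro x _; positivity
    have step4 : (∑ x, |f' x| ^ q) ^ ((1:ℝ)/q) = eNorm q f' * n ^ ((1:ℝ)/q) := by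
      unfold eNorm
      rw [← hndef, Real.div_rpow hAq_nonneg hn.le, div_mul_cancel₀]
      exact (Real.rpow_pos_of_pos hn _).ne'
    -- step 5 : the 2→q bound
    have step5 : eNorm q f' ≤ K * t := by
      have h1 := hnorm f'
      rw [hPfix f' (hPmem f)] at h1
      rw [htdef]
      exact h1
    -- combine
    have chain : n * t ^ 2 ≤ s ^ (1/p) * n ^ ((1:ℝ)/q) * (K * t) := by
      calc n * t ^ 2 = T2 := hT2_eq.symm
        _ = ∑ x, f x * f' x := step1
        _ ≤ (∑ x, |f x| ^ p) ^ (1/p) * (∑ x, |f' x| ^ q) ^ (1/q) := step2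
        _ = s ^ (1/p) * (eNorm q f' * n ^ ((1:ℝ)/q)) := by rw [step3, step4]
        _ ≤ s ^ (1/p) * ((K * t) * n ^ ((1:ℝ)/q)) := by
            apply mul_le_mul_of_nonneg_left _ (Real.rpow_nonneg hs.le _)
            apply mul_le_mul_of_nonneg_right step5 (by positivity)
        _ = s ^ (1/p) * n ^ ((1:ℝ)/q) * (K * t) := by ring
    by_cases ht0 : t = 0
    · rw [hT2_eq, ht0]
      norm_num
      exact mul_nonneg (sq_nonneg _) hs.le
    · have htpos : 0 < t := lt_of_le_of_ne ht_nonneg (Ne.symm ht0)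
      have h1 : n * t ≤ s ^ (1/p) * n ^ ((1:ℝ)/q) * K := by
        apply le_of_mul_le_mul_right _ htpos
        calc n * t * t = n * t ^ 2 := by ring
          _ ≤ s ^ (1/p) * n ^ ((1:ℝ)/q) * (K * t) := chain
          _ = s ^ (1/p) * n ^ ((1:ℝ)/q) * K * t := by ring
      set μ : ℝ := s / n with hμdef
      have hμpos : 0 < μ := div_pos hs hn
      have hμδ : μ ≤ δ := hSμ
      have h2 : t ≤ K * μ ^ (1/p) := by
        have hexp : (1:ℝ)/q - 1 = -(1/p) := by
          have := hpq.inv_add_inv_eq_one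
          rw [one_div, one_div]; linarith
        have hrw : s ^ (1/p) * n ^ ((1:ℝ)/q) / n = μ ^ (1/p) := by
          calc s ^ (1/p) * n ^ ((1:ℝ)/q) / n
              = s ^ (1/p) * (n ^ ((1:ℝ)/q) / n ^ (1:ℝ)) := by rw [Real.rpow_one]; ring
            _ = s ^ (1/p) * n ^ ((1:ℝ)/q - 1) := by rw [← Real.rpow_sub hn]
            _ = s ^ (1/p) * n ^ (-((1:ℝ)/p)) := by rw [hexp]
            _ = s ^ (1/p) * (n ^ ((1:ℝ)/p))⁻¹ := by rw [Real.rpow_neg hn.le]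
            _ = s ^ (1/p) / n ^ ((1:ℝ)/p) := by ring
            _ = μ ^ (1/p) := by rw [hμdef, Real.div_rpow hs.le hn.le]
        rw [← hrw]
        rw [div_eq_mul_inv, mul_comm (s ^ (1/p) * n ^ ((1:ℝ)/q)) _]
        calc t = n⁻¹ * (n * t) := by field_simp
          _ ≤ n⁻¹ * (s ^ (1/p) * n ^ ((1:ℝ)/q) * K) := by
              apply mul_le_mul_of_nonneg_left h1 (by positivity)
          _ = n⁻¹ * (s ^ (1/p) * n ^ ((1:ℝ)/q)) * K := by ring
          _ = K * (n⁻¹ * (s ^ (1/p) * n ^ ((1:ℝ)/q))) := by ring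
      have h3 : T2 ≤ n * (K ^ 2 * μ ^ (2/p)) := by
        rw [hT2_eq]
        apply mul_le_mul_of_nonneg_left _ hn.le
        calc t ^ 2 ≤ (K * μ ^ (1/p)) ^ 2 := by
              apply pow_le_pow_left₀ ht_nonneg h2
          _ = K ^ 2 * (μ ^ (1/p)) ^ 2 := by ring
          _ = K ^ 2 * μ ^ (2/p) := by
              rw [← Real.rpow_natCast (μ ^ (1/p)) 2, ← Real.rpow_mul hμpos.le]
              congr 1
              push_cast
              ring
      have h4 : n * (K ^ 2 * μ ^ (2/p)) ≤ ε ^ 2 * s := by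
        have h2p : 2/p = 1 + 2*α := by
          rw [hpdef, hαdef]; field_simp; ring
        have hμn : n * μ = s := by rw [hμdef]; field_simp
        have hδexp : (δ ^ α) ^ 2 = δ ^ (2*α) := by
          rw [← Real.rpow_natCast (δ ^ α) 2, ← Real.rpow_mul hδ.le]
          congr 1; push_cast; ring
        have hK2 : K ^ 2 = ε ^ 2 / δ ^ (2*α) := by rw [hKdef, div_pow, hδexp]
        have hμexp : μ ^ (2/p) = μ * μ ^ (2*α) := by
          rw [h2p, Real.rpow_add hμpos, Real.rpow_one]
        have hle1 : (μ/δ) ^ (2*α) ≤ 1 := by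
          apply Real.rpow_le_one (div_nonneg hμpos.le hδ.le) ((div_le_one hδ).mpr hμδ) (by linarith)
        calc n * (K ^ 2 * μ ^ (2/p))
            = (n*μ) * ε^2 * (μ ^ (2*α)/δ ^ (2*α)) := by rw [hK2, hμexp]; ring
          _ = ε^2 * s * ((μ/δ) ^ (2*α)) := by
              rw [hμn, Real.div_rpow hμpos.le hδ.le]; ring
          _ ≤ ε^2 * s * 1 := by
              apply mul_le_mul_of_nonneg_left hle1 (mul_nonneg (sq_nonneg _) hs.le)
          _ = ε^2 * s := by ring
      calc T2 ≤ n * (K ^ 2 * μ ^ (2/p)) := h3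
        _ ≤ ε ^ 2 * s := h4
  -- edge count
  have ec : ∑ x, f x * (M *ᵥ f) x = ((dreg : ℝ) * s - eBoundary G S) / dreg := by
    rw [hMdef, hfdef, hsdef]
    exact edge_count G dreg hd hreg S
  have main : ((dreg : ℝ) * s - eBoundary G S) / dreg ≤ ε ^ 2 * s + lam * s := by
    rw [← ec, decomp]
    have h2 : lam * ∑ x, g x * g x ≤ lam * s :=
      mul_le_mul_of_nonneg_left hgsq_le hlam0.le
    linarith
  rw [div_le_iff₀ hd0] at main
  rw [le_div_iff₀ (by positivity : (0:ℝ) < (dreg : ℝ) * s)]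
  nlinarith [hd0, hs, main]
end

section
/- Let A ∈ {0,1}^{n×d}, let k ≥ 1, let ⟨·,·⟩ : {0,1}^k × {0,1}^k → ℝ be an inner product function, let U ∈ {0,1}^{n×k}, V ∈ {0,1}^{k×d}, and ε ∈ (0,1). Then there exists a matrix W ∈ {0,1}^{k×d} such that ‖A − U·W‖₀ ≤ (1 + ε)·‖A − U·V‖₀ and, for any two distinct columns y, z of W (i.e. any distinct y, z in the set of vectors occurring as a column of W): (i) ‖U·y − U·z‖₀ > ε·2^{−k}·‖A − U·V‖₀ / min(|C^W_y|, |C^W_z|); and (ii) ‖A_{:,j} − U·y‖₀ ≤ ‖A_{:,j} − U·z‖₀ for every j ∈ C^W_y. -/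
open scoped Classical

/-- The `j`-th column of a `k × d` binary matrix. -/
def colOf {k d : ℕ} (V : Fin k → Fin d → Fin 2) (j : Fin d) : Fin k → Fin 2 :=
  fun l => V l j

/-- `‖A − U·V‖₀`: the number of positions `(i,j)` where `A i j ≠ ⟨U_{i,:}, V_{:,j}⟩`. -/
noncomputable def costUV {n d k : ℕ} (A : Fin n → Fin d → Fin 2)
    (ip : (Fin k → Fin 2) → (Fin k → Fin 2) → ℝ)
    (U : Fin n → Fin k → Fin 2) (V : Fin k → Fin d → Fin 2) : ℕ :=
  Nat.card {p : Fin n × Fin d // ((A p.1 p.2 : ℕ) : ℝ) ≠ ip (U p.1) (colOf V p.2)}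

/-- The cluster `C^V_y`: the set of columns of `V` equal to `y`. -/
def cluster {k d : ℕ} (V : Fin k → Fin d → Fin 2) (y : Fin k → Fin 2) : Finset (Fin d) :=
  Finset.univ.filter fun j => colOf V j = y

/-- `‖A_{:,j} − U·y‖₀`: the number of rows `i` with `A i j ≠ ⟨U_{i,:}, y⟩`. -/
noncomputable def colCost {n d k : ℕ} (A : Fin n → Fin d → Fin 2)
    (ip : (Fin k → Fin 2) → (Fin k → Fin 2) → ℝ)
    (U : Fin n → Fin k → Fin 2) (y : Fin k → Fin 2) (j : Fin d) : ℕ :=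
  Nat.card {i : Fin n // ((A i j : ℕ) : ℝ) ≠ ip (U i) y}

namespace Stmt15Aux

variable {n d k : ℕ}

/-- The set of "bad" positions. -/
noncomputable def bad (A : Fin n → Fin d → Fin 2)
    (ip : (Fin k → Fin 2) → (Fin k → Fin 2) → ℝ)
    (U : Fin n → Fin k → Fin 2) (W : Fin k → Fin d → Fin 2) : Finset (Fin n × Fin d) :=
  Finset.univ.filter fun p => ((A p.1 p.2 : ℕ) : ℝ) ≠ ip (U p.1) (colOf W p.2)

lemma costUV_eq (A : Fin n → Fin d → Fin 2) (ip : (Fin k → Fin 2) → (Fin k → Fin 2) → ℝ)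
    (U : Fin n → Fin k → Fin 2) (W : Fin k → Fin d → Fin 2) :
    costUV A ip U W = (bad A ip U W).card := by
  rw [costUV, Nat.card_eq_fintype_card, Fintype.card_subtype]
  rfl

lemma colCost_eq (A : Fin n → Fin d → Fin 2) (ip : (Fin k → Fin 2) → (Fin k → Fin 2) → ℝ)
    (U : Fin n → Fin k → Fin 2) (y : Fin k → Fin 2) (j : Fin d) :
    colCost A ip U y j
      = (Finset.univ.filter fun i : Fin n => ((A i j : ℕ) : ℝ) ≠ ip (U i) y).card := by
  rw [colCost, Nat.card_eq_fintype_card, Fintype.card_subtype]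

noncomputable def usedSet (W : Fin k → Fin d → Fin 2) : Finset (Fin k → Fin 2) :=
  Finset.univ.image (colOf W)

lemma mem_usedSet {W : Fin k → Fin d → Fin 2} {y : Fin k → Fin 2} :
    y ∈ usedSet W ↔ ∃ j, colOf W j = y := by
  simp [usedSet]

noncomputable def Dset (ip : (Fin k → Fin 2) → (Fin k → Fin 2) → ℝ)
    (U : Fin n → Fin k → Fin 2) (y z : Fin k → Fin 2) : Finset (Fin n) :=
  Finset.univ.filter fun i => ip (U i) y ≠ ip (U i) z

lemma diff_eq (ip : (Fin k → Fin 2) → (Fin k → Fin 2) → ℝ)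
    (U : Fin n → Fin k → Fin 2) (y z : Fin k → Fin 2) :
    Nat.card {i : Fin n // ip (U i) y ≠ ip (U i) z} = (Dset ip U y z).card := by
  rw [Nat.card_eq_fintype_card, Fintype.card_subtype]
  rfl

lemma Dset_symm (ip : (Fin k → Fin 2) → (Fin k → Fin 2) → ℝ)
    (U : Fin n → Fin k → Fin 2) (y z : Fin k → Fin 2) :
    Dset ip U y z = Dset ip U z y := by
  ext i; simp [Dset, ne_comm]

lemma cluster_card_pos {W : Fin k → Fin d → Fin 2} {y : Fin k → Fin 2}
    (hy : y ∈ usedSet W) : 0 < (cluster W y).card := by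
  obtain ⟨j, hj⟩ := mem_usedSet.mp hy
  exact Finset.card_pos.mpr ⟨j, by simp [cluster, hj]⟩

lemma bad_card_le (A : Fin n → Fin d → Fin 2) (ip : (Fin k → Fin 2) → (Fin k → Fin 2) → ℝ)
    (U : Fin n → Fin k → Fin 2) (W : Fin k → Fin d → Fin 2) :
    (bad A ip U W).card ≤ n * d := by
  calc (bad A ip U W).card ≤ (Finset.univ : Finset (Fin n × Fin d)).card :=
        Finset.card_filter_le _ _
    _ = n * d := by simp

lemma bad_filter_eq (A : Fin n → Fin d → Fin 2) (ip : (Fin k → Fin 2) → (Fin k → Fin 2) → ℝ)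
    (U : Fin n → Fin k → Fin 2) (W : Fin k → Fin d → Fin 2) (j0 : Fin d) :
    ((bad A ip U W).filter fun p => p.2 = j0).card = colCost A ip U (colOf W j0) j0 := by
  rw [colCost_eq]
  apply Finset.card_bij' (fun p _ => p.1) (fun i _ => (i, j0))
  case hi =>
    rintro ⟨a, b⟩ hp
    rw [Finset.mem_filter] at hp
    obtain ⟨h1, h2⟩ := hp
    dsimp at h2
    subst h2
    simp only [bad, Finset.mem_filter, Finset.mem_univ, true_and] at h1 ⊢
    exact h1
  case hj =>
    intro i hi
    simp only [Finset.mem_filter, Finset.mem_univ, true_and] at hi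
    refine Finset.mem_filter.mpr ⟨?_, rfl⟩
    simp only [bad, Finset.mem_filter, Finset.mem_univ, true_and]
    exact hi
  case left_inv =>
    rintro ⟨a, b⟩ hp
    rw [Finset.mem_filter] at hp
    obtain ⟨-, h2⟩ := hp
    dsimp at h2 ⊢
    subst h2
    rfl
  case right_inv =>
    intro i hi
    rfl

lemma bad_split (A : Fin n → Fin d → Fin 2) (ip : (Fin k → Fin 2) → (Fin k → Fin 2) → ℝ)
    (U : Fin n → Fin k → Fin 2) (W : Fin k → Fin d → Fin 2) (j0 : Fin d) :
    (bad A ip U W).card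
      = ((bad A ip U W).filter fun p => ¬ p.2 = j0).card + colCost A ip U (colOf W j0) j0 := by
  rw [← Finset.card_filter_add_card_filter_not (s := bad A ip U W)
      (p := fun p => p.2 = j0), bad_filter_eq]
  omega

/-- Merge cluster `y` into `z`. -/
def mergeW (W : Fin k → Fin d → Fin 2) (y z : Fin k → Fin 2) : Fin k → Fin d → Fin 2 :=
  fun l j => if colOf W j = y then z l else W l j

lemma colOf_merge (W : Fin k → Fin d → Fin 2) (y z : Fin k → Fin 2) (j : Fin d) :
    colOf (mergeW W y z) j = if colOf W j = y then z else colOf W j := by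
  by_cases h : colOf W j = y
  · rw [if_pos h]; funext l; simp [colOf, mergeW, h]
  · rw [if_neg h]; funext l; simp [colOf, mergeW, h]

lemma merge_bad_subset (A : Fin n → Fin d → Fin 2) (ip : (Fin k → Fin 2) → (Fin k → Fin 2) → ℝ)
    (U : Fin n → Fin k → Fin 2) (W : Fin k → Fin d → Fin 2) (y z : Fin k → Fin 2) :
    bad A ip U (mergeW W y z) ⊆ bad A ip U W ∪ (Dset ip U y z) ×ˢ (cluster W y) := by
  intro p hp
  simp only [bad, Finset.mem_filter, Finset.mem_univ, true_and] at hp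
  rw [colOf_merge] at hp
  by_cases hc : colOf W p.2 = y
  · rw [if_pos hc] at hp
    by_cases hD : ip (U p.1) y = ip (U p.1) z
    · refine Finset.mem_union_left _ ?_
      simp only [bad, Finset.mem_filter, Finset.mem_univ, true_and]
      rw [hc, hD]; exact hp
    · refine Finset.mem_union_right _ ?_
      rw [Finset.mem_product]
      exact ⟨by simp [Dset, hD], by simp [cluster, hc]⟩
  · rw [if_neg hc] at hp
    refine Finset.mem_union_left _ ?_
    simp only [bad, Finset.mem_filter, Finset.mem_univ, true_and]
    exact hp

lemma merge_used_subset (W : Fin k → Fin d → Fin 2) (y z : Fin k → Fin 2)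
    (hz : z ∈ usedSet W) (hzy : z ≠ y) :
    usedSet (mergeW W y z) ⊆ (usedSet W).erase y := by
  intro v hv
  obtain ⟨j, hj⟩ := mem_usedSet.mp hv
  rw [colOf_merge] at hj
  by_cases hc : colOf W j = y
  · rw [if_pos hc] at hj; subst hj; exact Finset.mem_erase.mpr ⟨hzy, hz⟩
  · rw [if_neg hc] at hj; subst hj
    exact Finset.mem_erase.mpr ⟨hc, mem_usedSet.mpr ⟨j, rfl⟩⟩

/-- Reassign column `j0` to vector `z`. -/
def reassignW (W : Fin k → Fin d → Fin 2) (j0 : Fin d) (z : Fin k → Fin 2) :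
    Fin k → Fin d → Fin 2 :=
  fun l j => if j = j0 then z l else W l j

lemma colOf_reassign (W : Fin k → Fin d → Fin 2) (j0 : Fin d) (z : Fin k → Fin 2) (j : Fin d) :
    colOf (reassignW W j0 z) j = if j = j0 then z else colOf W j := by
  by_cases h : j = j0
  · rw [if_pos h]; funext l; simp [colOf, reassignW, h]
  · rw [if_neg h]; funext l; simp [colOf, reassignW, h]

lemma reassign_off (A : Fin n → Fin d → Fin 2) (ip : (Fin k → Fin 2) → (Fin k → Fin 2) → ℝ)
    (U : Fin n → Fin k → Fin 2) (W : Fin k → Fin d → Fin 2) (j0 : Fin d) (z : Fin k → Fin 2) :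
    ((bad A ip U (reassignW W j0 z)).filter fun p => ¬ p.2 = j0)
      = ((bad A ip U W).filter fun p => ¬ p.2 = j0) := by
  ext p
  simp only [Finset.mem_filter, bad, Finset.mem_univ, true_and, colOf_reassign]
  by_cases h : p.2 = j0
  · simp [h]
  · simp [h]

lemma reassign_cost (A : Fin n → Fin d → Fin 2) (ip : (Fin k → Fin 2) → (Fin k → Fin 2) → ℝ)
    (U : Fin n → Fin k → Fin 2) (W : Fin k → Fin d → Fin 2) (j0 : Fin d) (z : Fin k → Fin 2) :
    (bad A ip U (reassignW W j0 z)).card + colCost A ip U (colOf W j0) j0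
      = (bad A ip U W).card + colCost A ip U z j0 := by
  have h0 : colOf (reassignW W j0 z) j0 = z := by rw [colOf_reassign, if_pos rfl]
  rw [bad_split A ip U (reassignW W j0 z) j0, bad_split A ip U W j0, reassign_off, h0]
  omega

lemma reassign_used_subset (W : Fin k → Fin d → Fin 2) (j0 : Fin d) (z : Fin k → Fin 2)
    (hz : z ∈ usedSet W) : usedSet (reassignW W j0 z) ⊆ usedSet W := by
  intro v hv
  obtain ⟨j, hj⟩ := mem_usedSet.mp hv
  rw [colOf_reassign] at hj
  by_cases h : j = j0
  · rw [if_pos h] at hj; exact hj ▸ hz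
  · rw [if_neg h] at hj; exact hj ▸ mem_usedSet.mpr ⟨j, rfl⟩

lemma merge_step (A : Fin n → Fin d → Fin 2) (ip : (Fin k → Fin 2) → (Fin k → Fin 2) → ℝ)
    (U : Fin n → Fin k → Fin 2) (δ : ℝ) (hδ0 : 0 ≤ δ) (W : Fin k → Fin d → Fin 2)
    (y z : Fin k → Fin 2) (hy : y ∈ usedSet W) (hz : z ∈ usedSet W) (hyz : y ≠ z)
    (hle : ((Dset ip U y z).card : ℝ) ≤ δ / ((cluster W y).card : ℝ)) :
    (usedSet (mergeW W y z)).card + 1 ≤ (usedSet W).card ∧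
    ((bad A ip U (mergeW W y z)).card : ℝ) ≤ ((bad A ip U W).card : ℝ) + δ := by
  have hCy : 0 < (cluster W y).card := cluster_card_pos hy
  constructor
  · have h1 := Finset.card_le_card (merge_used_subset W y z hz (Ne.symm hyz))
    rw [Finset.card_erase_of_mem hy] at h1
    have h2 : 0 < (usedSet W).card := Finset.card_pos.mpr ⟨y, hy⟩
    omega
  · have h1 := Finset.card_le_card (merge_bad_subset A ip U W y z)
    have h2 := Finset.card_union_le (bad A ip U W) ((Dset ip U y z) ×ˢ (cluster W y))
    rw [Finset.card_product] at h2
    have h3 : ((Dset ip U y z).card : ℝ) * ((cluster W y).card : ℝ) ≤ δ := by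
      rw [le_div_iff₀ (by exact_mod_cast hCy)] at hle
      exact hle
    have h4 : ((bad A ip U (mergeW W y z)).card : ℝ)
        ≤ ((bad A ip U W).card : ℝ)
          + ((Dset ip U y z).card : ℝ) * ((cluster W y).card : ℝ) := by
      have := h1.trans h2
      push_cast
      exact_mod_cast this
    linarith

lemma key (A : Fin n → Fin d → Fin 2) (ip : (Fin k → Fin 2) → (Fin k → Fin 2) → ℝ)
    (U : Fin n → Fin k → Fin 2) (V : Fin k → Fin d → Fin 2) (ε : ℝ) (hε0 : 0 < ε) :
    ∀ N : ℕ, ∀ W : Fin k → Fin d → Fin 2,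
      (usedSet W).card * (n * d + 1) + (bad A ip U W).card ≤ N →
      ∃ W' : Fin k → Fin d → Fin 2,
        (costUV A ip U W' : ℝ) ≤ (costUV A ip U W : ℝ)
            + ((usedSet W).card : ℝ) * (ε / 2 ^ k * (costUV A ip U V : ℝ)) ∧
        ∀ y z : Fin k → Fin 2, (∃ j, colOf W' j = y) → (∃ j, colOf W' j = z) → y ≠ z →
          (ε / 2 ^ k * (costUV A ip U V : ℝ) /
              ((min (cluster W' y).card (cluster W' z).card : ℕ) : ℝ)
            < (Nat.card {i : Fin n // ip (U i) y ≠ ip (U i) z} : ℝ)) ∧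
          ∀ j ∈ cluster W' y, colCost A ip U y j ≤ colCost A ip U z j := by
  intro N
  induction N using Nat.strong_induction_on with
  | _ N IH =>
  intro W hW
  set δ : ℝ := ε / 2 ^ k * (costUV A ip U V : ℝ) with hδdef
  have hδ0 : 0 ≤ δ := by
    have : (0:ℝ) ≤ (costUV A ip U V : ℝ) := Nat.cast_nonneg _
    positivity
  by_cases h1 : ∃ y z : Fin k → Fin 2, y ∈ usedSet W ∧ z ∈ usedSet W ∧ y ≠ z ∧
      (Nat.card {i : Fin n // ip (U i) y ≠ ip (U i) z} : ℝ) ≤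
        δ / ((min (cluster W y).card (cluster W z).card : ℕ) : ℝ)
  · -- merge case
    obtain ⟨y, z, hy, hz, hyz, hle⟩ := h1
    rw [diff_eq] at hle
    have hmain : ∀ (y' z' : Fin k → Fin 2), y' ∈ usedSet W → z' ∈ usedSet W → y' ≠ z' →
        ((Dset ip U y' z').card : ℝ) ≤ δ / ((cluster W y').card : ℝ) →
        ∃ W' : Fin k → Fin d → Fin 2,
          (costUV A ip U W' : ℝ) ≤ (costUV A ip U W : ℝ) + ((usedSet W).card : ℝ) * δ ∧
          ∀ y z : Fin k → Fin 2, (∃ j, colOf W' j = y) → (∃ j, colOf W' j = z) → y ≠ z →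
            (δ / ((min (cluster W' y).card (cluster W' z).card : ℕ) : ℝ)
              < (Nat.card {i : Fin n // ip (U i) y ≠ ip (U i) z} : ℝ)) ∧
            ∀ j ∈ cluster W' y, colCost A ip U y j ≤ colCost A ip U z j := by
      intro y' z' hy' hz' hyz' hle'
      obtain ⟨hused, hbad⟩ := merge_step A ip U δ hδ0 W y' z' hy' hz' hyz' hle'
      set W₁ := mergeW W y' z' with hW₁
      have hb₁ : (bad A ip U W₁).card ≤ n * d := bad_card_le A ip U W₁
      have hmeas : (usedSet W₁).card * (n * d + 1) + (bad A ip U W₁).card < N := by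
        have step1 : (usedSet W₁).card * (n * d + 1) + (bad A ip U W₁).card
            < ((usedSet W₁).card + 1) * (n * d + 1) := by
          rw [add_mul, one_mul]
          exact Nat.add_lt_add_left (by omega) _
        have step2 : ((usedSet W₁).card + 1) * (n * d + 1) ≤ (usedSet W).card * (n * d + 1) :=
          Nat.mul_le_mul_right _ hused
        calc (usedSet W₁).card * (n * d + 1) + (bad A ip U W₁).card
            < (usedSet W).card * (n * d + 1) := lt_of_lt_of_le step1 step2
          _ ≤ (usedSet W).card * (n * d + 1) + (bad A ip U W).card := Nat.le_add_right _ _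
          _ ≤ N := hW
      obtain ⟨W', hcost, hfin⟩ := IH _ hmeas W₁ le_rfl
      refine ⟨W', ?_, hfin⟩
      have hu : ((usedSet W₁).card : ℝ) + 1 ≤ ((usedSet W).card : ℝ) := by exact_mod_cast hused
      rw [costUV_eq A ip U W₁] at hcost
      rw [costUV_eq A ip U W]
      nlinarith [hcost, hbad, hδ0, hu]
    rcases le_total (cluster W y).card (cluster W z).card with hmin | hmin
    · apply hmain y z hy hz hyz
      rwa [min_eq_left hmin] at hle
    · apply hmain z y hz hy (Ne.symm hyz)
      rw [← Dset_symm]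
      rwa [min_eq_right hmin] at hle
  by_cases h2 : ∃ j0 : Fin d, ∃ z ∈ usedSet W,
      colCost A ip U z j0 < colCost A ip U (colOf W j0) j0
  · -- reassign case
    obtain ⟨j0, z, hz, hlt⟩ := h2
    have hbad : (bad A ip U (reassignW W j0 z)).card < (bad A ip U W).card := by
      have := reassign_cost A ip U W j0 z
      omega
    set W₁ := reassignW W j0 z with hW₁
    have hused : (usedSet W₁).card ≤ (usedSet W).card :=
      Finset.card_le_card (reassign_used_subset W j0 z hz)
    have hmeas : (usedSet W₁).card * (n * d + 1) + (bad A ip U W₁).card < N := by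
      have step2 : (usedSet W₁).card * (n * d + 1) ≤ (usedSet W).card * (n * d + 1) :=
        Nat.mul_le_mul_right _ hused
      calc (usedSet W₁).card * (n * d + 1) + (bad A ip U W₁).card
          < (usedSet W).card * (n * d + 1) + (bad A ip U W).card :=
            Nat.add_lt_add_of_le_of_lt step2 hbad
        _ ≤ N := hW
    obtain ⟨W', hcost, hfin⟩ := IH _ hmeas W₁ le_rfl
    refine ⟨W', ?_, hfin⟩
    have hu : ((usedSet W₁).card : ℝ) ≤ ((usedSet W).card : ℝ) := by exact_mod_cast hused
    have hb : ((bad A ip U W₁).card : ℝ) ≤ ((bad A ip U W).card : ℝ) := by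
      exact_mod_cast hbad.le
    rw [costUV_eq A ip U W₁] at hcost
    rw [costUV_eq A ip U W]
    nlinarith [hcost, hδ0, hu, hb]
  · -- done
    push_neg at h1 h2
    refine ⟨W, le_add_of_nonneg_right (by positivity), ?_⟩
    intro y z hy hz hyz
    have hy' : y ∈ usedSet W := mem_usedSet.mpr hy
    have hz' : z ∈ usedSet W := mem_usedSet.mpr hz
    refine ⟨h1 y z hy' hz' hyz, ?_⟩
    · intro j hj
      have hcol : colOf W j = y := (Finset.mem_filter.mp hj).2
      have := h2 j z hz'
      rwa [hcol] at this

end Stmt15Aux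

/-- Existence of a `(U,V,ε)`-clusterable solution `W`. -/
theorem stmt15 {n d k : ℕ} (hk : 1 ≤ k) (A : Fin n → Fin d → Fin 2)
    (ip : (Fin k → Fin 2) → (Fin k → Fin 2) → ℝ)
    (U : Fin n → Fin k → Fin 2) (V : Fin k → Fin d → Fin 2)
    (ε : ℝ) (hε0 : 0 < ε) (hε1 : ε < 1) :
    ∃ W : Fin k → Fin d → Fin 2,
      (costUV A ip U W : ℝ) ≤ (1 + ε) * (costUV A ip U V : ℝ) ∧
      ∀ y z : Fin k → Fin 2, (∃ j, colOf W j = y) → (∃ j, colOf W j = z) → y ≠ z →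
        (ε / 2 ^ k * (costUV A ip U V : ℝ) /
            ((min (cluster W y).card (cluster W z).card : ℕ) : ℝ)
          < (Nat.card {i : Fin n // ip (U i) y ≠ ip (U i) z} : ℝ)) ∧
        ∀ j ∈ cluster W y, colCost A ip U y j ≤ colCost A ip U z j := by
  obtain ⟨W, hcost, hfin⟩ := Stmt15Aux.key A ip U V ε hε0
    ((Stmt15Aux.usedSet V).card * (n * d + 1) + (Stmt15Aux.bad A ip U V).card) V le_rfl
  refine ⟨W, ?_, hfin⟩
  have hu : ((Stmt15Aux.usedSet V).card : ℝ) ≤ 2 ^ k := by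
    have h1 := Finset.card_le_univ (Stmt15Aux.usedSet V)
    have h2 : Fintype.card (Fin k → Fin 2) = 2 ^ k := by simp
    rw [h2] at h1
    exact_mod_cast h1
  have hc0 : (0:ℝ) ≤ (costUV A ip U V : ℝ) := Nat.cast_nonneg _
  have h2k : (0:ℝ) < 2 ^ k := by positivity
  have hδ0 : (0:ℝ) ≤ ε / 2 ^ k * (costUV A ip U V : ℝ) := by positivity
  calc (costUV A ip U W : ℝ)
      ≤ (costUV A ip U V : ℝ)
          + ((Stmt15Aux.usedSet V).card : ℝ) * (ε / 2 ^ k * (costUV A ip U V : ℝ)) := hcost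
    _ ≤ (costUV A ip U V : ℝ) + 2 ^ k * (ε / 2 ^ k * (costUV A ip U V : ℝ)) := by
        nlinarith [hu, hδ0]
    _ = (1 + ε) * (costUV A ip U V : ℝ) := by
        field_simp
end

section
/- Let A ∈ {0,1}^{n×d}, k ≥ 1, ⟨·,·⟩ an inner product function, V ∈ {0,1}^{k×d}, and let U ∈ {0,1}^{n×k} be a best response to V. Then for every i ∈ {1,…,n} and x ∈ {0,1}^k with D_{i,x} ≤ E_i: ∑_{y ∈ Ŷ_{i,x}} |C^V_y| ≤ 3·E_i. Consequently, for every ε ∈ (0,1), writing L₁ = { (i,x) : (ε/3)·E_i < D_{i,x} ≤ E_i }, one has ∑_{(i,x) ∈ L₁} ∑_{y ∈ Ŷ_{i,x}} |C^V_y| ≤ 2^{k+2} · OPT_k^V. -/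
open scoped Classical

/-- `OPT_k^V`: the minimum of `‖A − U·V‖₀` over all `U`. -/
noncomputable def optV {n d k : ℕ} (A : Fin n → Fin d → Fin 2)
    (ip : (Fin k → Fin 2) → (Fin k → Fin 2) → ℝ)
    (V : Fin k → Fin d → Fin 2) : ℕ :=
  sInf {c : ℕ | ∃ U : Fin n → Fin k → Fin 2, c = costUV A ip U V}

/-- The exact cost `E_{i,x}` of row `i` for the vector `x`. -/
noncomputable def rowCost {n d k : ℕ} (A : Fin n → Fin d → Fin 2)
    (ip : (Fin k → Fin 2) → (Fin k → Fin 2) → ℝ)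
    (V : Fin k → Fin d → Fin 2) (i : Fin n) (x : Fin k → Fin 2) : ℕ :=
  Nat.card {j : Fin d // ((A i j : ℕ) : ℝ) ≠ ip x (colOf V j)}

lemma rowCost_eq {n d k : ℕ} (A : Fin n → Fin d → Fin 2)
    (ip : (Fin k → Fin 2) → (Fin k → Fin 2) → ℝ)
    (V : Fin k → Fin d → Fin 2) (i : Fin n) (x : Fin k → Fin 2) :
    rowCost A ip V i x
      = (Finset.univ.filter fun j => ((A i j : ℕ) : ℝ) ≠ ip x (colOf V j)).card := by
  simp [rowCost, Nat.card_eq_fintype_card, Fintype.card_subtype]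

lemma costUV_eq {n d k : ℕ} (A : Fin n → Fin d → Fin 2)
    (ip : (Fin k → Fin 2) → (Fin k → Fin 2) → ℝ)
    (U : Fin n → Fin k → Fin 2) (V : Fin k → Fin d → Fin 2) :
    costUV A ip U V = ∑ i : Fin n, rowCost A ip V i (U i) := by
  rw [costUV, Nat.card_eq_fintype_card,
    Fintype.card_congr (Equiv.subtypeProdEquivSigmaSubtype
      (fun i j => ((A i j : ℕ) : ℝ) ≠ ip (U i) (colOf V j))),
    Fintype.card_sigma]
  refine Finset.sum_congr rfl fun i _ => ?_
  rw [rowCost, Nat.card_eq_fintype_card]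

lemma key_lemma {n d k : ℕ} (A : Fin n → Fin d → Fin 2)
    (ip : (Fin k → Fin 2) → (Fin k → Fin 2) → ℝ)
    (V : Fin k → Fin d → Fin 2) (U : Fin n → Fin k → Fin 2)
    (i : Fin n) (x : Fin k → Fin 2) :
    (∑ y : Fin k → Fin 2,
        if ip x y ≠ ip (U i) y then ((cluster V y).card : ℝ) else 0) ≤
      (rowCost A ip V i x : ℝ) + (rowCost A ip V i (U i) : ℝ) := by
  set S : Finset (Fin d) :=
    Finset.univ.filter (fun j => ip x (colOf V j) ≠ ip (U i) (colOf V j)) with hS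
  have hfib : (S.card : ℝ)
      = ∑ y : Fin k → Fin 2,
          if ip x y ≠ ip (U i) y then ((cluster V y).card : ℝ) else 0 := by
    rw [Finset.card_eq_sum_card_fiberwise
      (f := fun j => colOf V j) (t := Finset.univ) (fun _ _ => Finset.mem_univ _)]
    push_cast
    refine Finset.sum_congr rfl fun y _ => ?_
    by_cases h : ip x y ≠ ip (U i) y
    · rw [if_pos h]
      congr 2
      ext j
      simp only [hS, cluster, Finset.mem_filter, Finset.mem_univ, true_and,
        and_iff_right_iff_imp]
      rintro rfl
      exact h
    · rw [if_neg h]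
      push_neg at h
      have : S.filter (fun j => colOf V j = y) = ∅ := by
        apply Finset.filter_eq_empty_iff.mpr
        intro j hj hy
        simp only [hS, Finset.mem_filter] at hj
        exact hj.2 (hy ▸ h)
      simp [this]
  rw [← hfib, rowCost_eq, rowCost_eq]
  have hsub : S ⊆ (Finset.univ.filter fun j => ((A i j : ℕ) : ℝ) ≠ ip x (colOf V j)) ∪
      (Finset.univ.filter fun j => ((A i j : ℕ) : ℝ) ≠ ip (U i) (colOf V j)) := by
    intro j hj
    simp only [hS, Finset.mem_filter, Finset.mem_univ, true_and] at hj
    simp only [Finset.mem_union, Finset.mem_filter, Finset.mem_univ, true_and]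
    by_contra hc
    push_neg at hc
    exact hj (hc.1 ▸ hc.2)
  have := (Finset.card_le_card hsub).trans (Finset.card_union_le _ _)
  exact_mod_cast this

/-- If `D_{i,x} ≤ E_i` then `∑_{y ∈ Ŷ_{i,x}} |C^V_y| ≤ 3·E_i`;
consequently, summing over `L₁ = {(i,x) : (ε/3)·E_i < D_{i,x} ≤ E_i}` gives at most
`2^{k+2} · OPT_k^V`. -/
theorem stmt18 {n d k : ℕ} (hk : 1 ≤ k) (A : Fin n → Fin d → Fin 2)
    (ip : (Fin k → Fin 2) → (Fin k → Fin 2) → ℝ)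
    (V : Fin k → Fin d → Fin 2) (U : Fin n → Fin k → Fin 2)
    (hbest : costUV A ip U V = optV A ip V) :
    (∀ (i : Fin n) (x : Fin k → Fin 2),
      (rowCost A ip V i x : ℝ) - (rowCost A ip V i (U i) : ℝ) ≤
          (rowCost A ip V i (U i) : ℝ) →
      (∑ y : Fin k → Fin 2,
          if ip x y ≠ ip (U i) y then ((cluster V y).card : ℝ) else 0) ≤
        3 * (rowCost A ip V i (U i) : ℝ)) ∧
    ∀ ε : ℝ, 0 < ε → ε < 1 →
      (∑ i : Fin n, ∑ x : Fin k → Fin 2,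
        if ε / 3 * (rowCost A ip V i (U i) : ℝ) <
              (rowCost A ip V i x : ℝ) - (rowCost A ip V i (U i) : ℝ) ∧
            (rowCost A ip V i x : ℝ) - (rowCost A ip V i (U i) : ℝ) ≤
              (rowCost A ip V i (U i) : ℝ) then
          (∑ y : Fin k → Fin 2,
            if ip x y ≠ ip (U i) y then ((cluster V y).card : ℝ) else 0)
        else 0) ≤
      2 ^ (k + 2) * (optV A ip V : ℝ) := by

  have part1 : ∀ (i : Fin n) (x : Fin k → Fin 2),
      (rowCost A ip V i x : ℝ) - (rowCost A ip V i (U i) : ℝ) ≤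
          (rowCost A ip V i (U i) : ℝ) →
      (∑ y : Fin k → Fin 2,
          if ip x y ≠ ip (U i) y then ((cluster V y).card : ℝ) else 0) ≤
        3 * (rowCost A ip V i (U i) : ℝ) := by
    intro i x hD
    have := key_lemma A ip V U i x
    linarith
  refine ⟨part1, ?_⟩
  intro ε hε0 hε1
  have hsum : (∑ i : Fin n, (rowCost A ip V i (U i) : ℝ)) = (optV A ip V : ℝ) := by
    rw [← hbest, costUV_eq]
    push_cast
    ring
  have hstep : ∀ i : Fin n,
      (∑ x : Fin k → Fin 2,
        if ε / 3 * (rowCost A ip V i (U i) : ℝ) <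
              (rowCost A ip V i x : ℝ) - (rowCost A ip V i (U i) : ℝ) ∧
            (rowCost A ip V i x : ℝ) - (rowCost A ip V i (U i) : ℝ) ≤
              (rowCost A ip V i (U i) : ℝ) then
          (∑ y : Fin k → Fin 2,
            if ip x y ≠ ip (U i) y then ((cluster V y).card : ℝ) else 0)
        else 0) ≤ (2 : ℝ) ^ k * (3 * (rowCost A ip V i (U i) : ℝ)) := by
    intro i
    have hb : ∀ x : Fin k → Fin 2,
        (if ε / 3 * (rowCost A ip V i (U i) : ℝ) <
              (rowCost A ip V i x : ℝ) - (rowCost A ip V i (U i) : ℝ) ∧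
            (rowCost A ip V i x : ℝ) - (rowCost A ip V i (U i) : ℝ) ≤
              (rowCost A ip V i (U i) : ℝ) then
          (∑ y : Fin k → Fin 2,
            if ip x y ≠ ip (U i) y then ((cluster V y).card : ℝ) else 0)
        else 0) ≤ 3 * (rowCost A ip V i (U i) : ℝ) := by
      intro x
      by_cases h : ε / 3 * (rowCost A ip V i (U i) : ℝ) <
              (rowCost A ip V i x : ℝ) - (rowCost A ip V i (U i) : ℝ) ∧
            (rowCost A ip V i x : ℝ) - (rowCost A ip V i (U i) : ℝ) ≤
              (rowCost A ip V i (U i) : ℝ)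
      · rw [if_pos h]; exact part1 i x h.2
      · rw [if_neg h]; positivity
    calc _ ≤ ∑ _x : Fin k → Fin 2, 3 * (rowCost A ip V i (U i) : ℝ) :=
            Finset.sum_le_sum fun x _ => hb x
      _ = (2 : ℝ) ^ k * (3 * (rowCost A ip V i (U i) : ℝ)) := by
            rw [Finset.sum_const]
            simp [Finset.card_univ]
  calc _ ≤ ∑ i : Fin n, (2 : ℝ) ^ k * (3 * (rowCost A ip V i (U i) : ℝ)) :=
        Finset.sum_le_sum fun i _ => hstep i
    _ = 3 * 2 ^ k * (optV A ip V : ℝ) := by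
        rw [← Finset.mul_sum, ← Finset.mul_sum, hsum]; ring
    _ ≤ 2 ^ (k + 2) * (optV A ip V : ℝ) := by
        have : (3 : ℝ) * 2 ^ k ≤ 2 ^ (k + 2) := by
          rw [pow_add]; nlinarith [pow_pos (by norm_num : (0:ℝ) < 2) k]
        exact mul_le_mul_of_nonneg_right this (by positivity)
end
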